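/- arXiv:2602.06253 — 10 statements merged into one kernel-verified Lean document; each statement's English description precedes it below -/
import Mathlib

section
/- In second-order intuitionistic tense logic IKt2 (with diamonds), the formula ◊A ↔ ∀X (□(A → ■X) → X) is provable, where X does not occur free in A. -/
namespace SOTenseD

/-- Formulas of second-order tense logic with *native* diamonds ◊, ◆. -/
inductive Fm : Type where
  | pr : ℕ → Fm
  | var : ℕ → Fm
  | imp : Fm → Fm → Fm
  | box : Fm → Fm
  | bbox : Fm → Fm
  | dia : Fm → Fm
  | bdia : Fm → Fm
  | all : Fm → Fm

namespace Fm

/-- Shift de Bruijn variables ≥ c by one. -/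
def lift (c : ℕ) : Fm → Fm
  | pr p => pr p
  | var n => if n < c then var n else var (n + 1)
  | imp A B => imp (A.lift c) (B.lift c)
  | box A => box (A.lift c)
  | bbox A => bbox (A.lift c)
  | dia A => dia (A.lift c)
  | bdia A => bdia (A.lift c)
  | all A => all (A.lift (c + 1))

/-- Substitute C for de Bruijn variable k. -/
def subst : Fm → ℕ → Fm → Fm
  | pr p, _, _ => pr p
  | var n, k, C => if n < k then var n else if n = k then C else var (n - 1)
  | imp A B, k, C => imp (A.subst k C) (B.subst k C)
  | box A, k, C => box (A.subst k C)
  | bbox A, k, C => bbox (A.subst k C)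
  | dia A, k, C => dia (A.subst k C)
  | bdia A, k, C => bdia (A.subst k C)
  | all A, k, C => all (A.subst (k + 1) (C.lift 0))

/-- A[C/X]: instantiate the outermost bound variable of the body A with C. -/
def inst (A C : Fm) : Fm := A.subst 0 C

/-- The propositional symbol P occurs in the formula. -/
def occursPr (P : ℕ) : Fm → Prop
  | pr p => p = P
  | var _ => False
  | imp A B => A.occursPr P ∨ B.occursPr P
  | box A => A.occursPr P
  | bbox A => A.occursPr P
  | dia A => A.occursPr P
  | bdia A => A.occursPr P
  | all A => A.occursPr P

/-- A ∧ B := ∀X((A → B → X) → X) -/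
def conj (A B : Fm) : Fm :=
  all (imp (imp (A.lift 0) (imp (B.lift 0) (var 0))) (var 0))
/-- A ↔ B := (A → B) ∧ (B → A) -/
def iff (A B : Fm) : Fm := conj (imp A B) (imp B A)

/-- ∀X(□(A → ■X) → X), where X does not occur free in A
(guaranteed by the de Bruijn lift). -/
def soDia (A : Fm) : Fm :=
  all (imp (box (imp (A.lift 0) (bbox (var 0)))) (var 0))
/-- ∀X(■(A → □X) → X), where X does not occur free in A. -/
def soBdia (A : Fm) : Fm :=
  all (imp (bbox (imp (A.lift 0) (box (var 0)))) (var 0))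

end Fm

/-- IKt2(◊,◆): second-order intuitionistic tense logic with native diamonds:
IPL2 (K, S, ∀-distribution, vacuous quantification, full comprehension,
modus ponens, generalization), normality of all four modalities,
□/■-necessitation, and the adjunction axioms ◆□A→A, A→□◆A, ◊■A→A, A→■◊A. -/
inductive IKtD : Fm → Prop where
  | axK (A B : Fm) : IKtD (A.imp (B.imp A))
  | axS (A B C : Fm) :
      IKtD ((A.imp (B.imp C)).imp ((A.imp B).imp (A.imp C)))
  | axAllFun (A B : Fm) :
      IKtD ((Fm.all (A.imp B)).imp ((Fm.all A).imp (Fm.all B)))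
  | axV (A : Fm) : IKtD (A.imp (Fm.all (A.lift 0)))
  | axC (A C : Fm) : IKtD ((Fm.all A).imp (A.inst C))
  | mp {A B : Fm} : IKtD (A.imp B) → IKtD A → IKtD B
  | gen {A : Fm} {P : ℕ} :
      IKtD (A.inst (Fm.pr P)) → ¬ (Fm.all A).occursPr P → IKtD (Fm.all A)
  | axBoxFun (A B : Fm) :
      IKtD ((Fm.box (A.imp B)).imp ((Fm.box A).imp (Fm.box B)))
  | axDiaFun (A B : Fm) :
      IKtD ((Fm.box (A.imp B)).imp ((Fm.dia A).imp (Fm.dia B)))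
  | axBboxFun (A B : Fm) :
      IKtD ((Fm.bbox (A.imp B)).imp ((Fm.bbox A).imp (Fm.bbox B)))
  | axBdiaFun (A B : Fm) :
      IKtD ((Fm.bbox (A.imp B)).imp ((Fm.bdia A).imp (Fm.bdia B)))
  | necBox {A : Fm} : IKtD A → IKtD (Fm.box A)
  | necBbox {A : Fm} : IKtD A → IKtD (Fm.bbox A)
  | axTenseBdiaBox (A : Fm) : IKtD ((Fm.bdia (Fm.box A)).imp A)
  | axTenseBoxBdia (A : Fm) : IKtD (A.imp (Fm.box (Fm.bdia A)))
  | axTenseDiaBbox (A : Fm) : IKtD ((Fm.dia (Fm.bbox A)).imp A)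
  | axTenseBboxDia (A : Fm) : IKtD (A.imp (Fm.bbox (Fm.dia A)))

namespace Fm

/-- One more than the largest propositional symbol occurring. -/
def maxPr : Fm → ℕ
  | pr p => p + 1
  | var _ => 0
  | imp A B => max (A.maxPr) (B.maxPr)
  | box A => A.maxPr
  | bbox A => A.maxPr
  | dia A => A.maxPr
  | bdia A => A.maxPr
  | all A => A.maxPr

theorem maxPr_lift (A : Fm) : ∀ c, (A.lift c).maxPr = A.maxPr := by
  induction A <;> intro c <;> simp [lift, maxPr, *]
  split <;> rfl

theorem not_occursPr {A : Fm} {n : ℕ} (h : A.maxPr ≤ n) : ¬ A.occursPr n := by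
  induction A with
  | pr p => simp [occursPr]; simp [maxPr] at h; omega
  | var m => simp [occursPr]
  | imp B C ihB ihC =>
      simp [maxPr] at h
      simp [occursPr]; exact ⟨ihB h.1, ihC h.2⟩
  | box B ih => exact ih h
  | bbox B ih => exact ih h
  | dia B ih => exact ih h
  | bdia B ih => exact ih h
  | all B ih => exact ih h

theorem subst_lift (A : Fm) : ∀ (k : ℕ) (C : Fm), (A.lift k).subst k C = A := by
  induction A with
  | pr p => intro k C; simp [lift, subst]
  | var n =>
      intro k C
      by_cases h : n < k
      · simp [lift, subst, h]
      · simp [lift, h, subst]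
        have h1 : ¬ n + 1 < k := by omega
        have h2 : ¬ n + 1 = k := by omega
        simp [h1, h2]
  | imp B D ihB ihD => intro k C; simp [lift, subst, ihB, ihD]
  | box B ih => intro k C; simp [lift, subst, ih]
  | bbox B ih => intro k C; simp [lift, subst, ih]
  | dia B ih => intro k C; simp [lift, subst, ih]
  | bdia B ih => intro k C; simp [lift, subst, ih]
  | all B ih => intro k C; simp [lift, subst, ih]

end Fm

open Fm IKtD

theorem imp_id (A : Fm) : IKtD (A.imp A) :=
  mp (mp (axS A (A.imp A) A) (axK A (A.imp A))) (axK A A)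

theorem imp_trans {A B C : Fm} (h1 : IKtD (A.imp B)) (h2 : IKtD (B.imp C)) :
    IKtD (A.imp C) :=
  mp (mp (axS A B C) (mp (axK (B.imp C) A) h2)) h1

theorem swap_imp {A B C : Fm} (h : IKtD (A.imp (B.imp C))) :
    IKtD (B.imp (A.imp C)) :=
  imp_trans (axK B A) (mp (axS A B C) h)

theorem ap_under {A B C : Fm} (h : IKtD (A.imp (B.imp C))) (hb : IKtD B) :
    IKtD (A.imp C) :=
  mp (mp (axS A B C) h) (mp (axK B A) hb)

theorem imp_trans_under {A B C D : Fm} (h : IKtD (A.imp (B.imp C)))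
    (g : IKtD (C.imp D)) : IKtD (A.imp (B.imp D)) :=
  imp_trans h (mp (axS B C D) (mp (axK (C.imp D) B) g))

theorem app_self {X Y : Fm} (hx : IKtD X) : IKtD ((X.imp Y).imp Y) :=
  ap_under (imp_id (X.imp Y)) hx

theorem conj_intro {F G : Fm} (hF : IKtD F) (hG : IKtD G) :
    IKtD (F.conj G) := by
  set n := max F.maxPr G.maxPr with hn
  apply IKtD.gen (P := n)
  · show IKtD ((Fm.imp (Fm.imp (F.lift 0) (Fm.imp (G.lift 0) (Fm.var 0)))
      (Fm.var 0)).inst (Fm.pr n))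
    simp only [Fm.inst, Fm.subst, Fm.subst_lift, if_pos, Nat.lt_irrefl,
      if_neg, if_true, reduceIte]
    exact imp_trans (app_self (Y := (G.imp (Fm.pr n))) hF) (app_self hG)
  · apply Fm.not_occursPr
    simp [Fm.maxPr, Fm.maxPr_lift]
    exact ⟨le_max_left _ _, le_max_right _ _⟩

/-- In IKt2(◊,◆), the formula ◊A ↔ ∀X(□(A → ■X) → X) is provable,
where X does not occur free in A. -/
theorem dia_iff_soDia (A : Fm) : IKtD ((Fm.dia A).iff (Fm.soDia A)) := by
  have fwd : IKtD ((Fm.dia A).imp (Fm.soDia A)) := by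
    -- prove ∀X(◊A → (□(A→■X) → X)), then distribute
    have hG : IKtD (Fm.all (Fm.imp ((Fm.dia A).lift 0)
        (Fm.imp (Fm.box (Fm.imp (A.lift 0) (Fm.bbox (Fm.var 0)))) (Fm.var 0)))) := by
      apply IKtD.gen (P := A.maxPr)
      · simp only [Fm.inst, Fm.subst, Fm.subst_lift, Nat.lt_irrefl, reduceIte]
        -- goal : ◊A → (□(A→■p) → p)
        have t1 : IKtD ((Fm.box (A.imp (Fm.bbox (Fm.pr A.maxPr)))).imp
            ((Fm.dia A).imp (Fm.dia (Fm.bbox (Fm.pr A.maxPr))))) :=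
          axDiaFun A (Fm.bbox (Fm.pr A.maxPr))
        have t2 : IKtD ((Fm.dia (Fm.bbox (Fm.pr A.maxPr))).imp (Fm.pr A.maxPr)) :=
          axTenseDiaBbox (Fm.pr A.maxPr)
        exact swap_imp (imp_trans_under t1 t2)
      · apply Fm.not_occursPr
        simp [Fm.maxPr, Fm.maxPr_lift, Fm.lift]
    have hdist := mp (axAllFun ((Fm.dia A).lift 0)
      (Fm.imp (Fm.box (Fm.imp (A.lift 0) (Fm.bbox (Fm.var 0)))) (Fm.var 0))) hG
    exact imp_trans (axV (Fm.dia A)) hdist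
  have bwd : IKtD ((Fm.soDia A).imp (Fm.dia A)) := by
    have hc := axC (Fm.imp (Fm.box (Fm.imp (A.lift 0) (Fm.bbox (Fm.var 0))))
      (Fm.var 0)) (Fm.dia A)
    simp only [Fm.inst, Fm.subst, Fm.subst_lift, Nat.lt_irrefl, reduceIte] at hc
    -- hc : soDia A → (□(A→■◊A) → ◊A)
    have hbox : IKtD (Fm.box (A.imp (Fm.bbox (Fm.dia A)))) :=
      necBox (axTenseBboxDia A)
    exact ap_under hc hbox
  exact conj_intro fwd bwd

end SOTenseD
end

section
/- In IKt2 (where ◊A is defined as ∀X(□(A→■X)→X)), the half-adjunction axiom ◊■A → A is derivable from the remaining axioms, i.e. without using the axioms T_{◊■} or functoriality of ◊. -/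
namespace SOTense

/-- Formulas of second-order tense logic: propositional symbols, de Bruijn
second-order variables, implication, □, ■, and second-order ∀. -/
inductive Fm : Type where
  | pr : ℕ → Fm
  | var : ℕ → Fm
  | imp : Fm → Fm → Fm
  | box : Fm → Fm
  | bbox : Fm → Fm
  | all : Fm → Fm

namespace Fm

/-- Shift de Bruijn variables ≥ c by one. -/
def lift (c : ℕ) : Fm → Fm
  | pr p => pr p
  | var n => if n < c then var n else var (n + 1)
  | imp A B => imp (A.lift c) (B.lift c)
  | box A => box (A.lift c)
  | bbox A => bbox (A.lift c)
  | all A => all (A.lift (c + 1))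

/-- Substitute C for de Bruijn variable k. -/
def subst : Fm → ℕ → Fm → Fm
  | pr p, _, _ => pr p
  | var n, k, C => if n < k then var n else if n = k then C else var (n - 1)
  | imp A B, k, C => imp (A.subst k C) (B.subst k C)
  | box A, k, C => box (A.subst k C)
  | bbox A, k, C => bbox (A.subst k C)
  | all A, k, C => all (A.subst (k + 1) (C.lift 0))

/-- A[C/X]: instantiate the outermost bound variable of the body A with C. -/
def inst (A C : Fm) : Fm := A.subst 0 C

/-- The propositional symbol P occurs in the formula. -/
def occursPr (P : ℕ) : Fm → Prop
  | pr p => p = P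
  | var _ => False
  | imp A B => A.occursPr P ∨ B.occursPr P
  | box A => A.occursPr P
  | bbox A => A.occursPr P
  | all A => A.occursPr P

/-- ⊥ := ∀X X -/
def bot : Fm := all (var 0)
/-- ¬A := A → ⊥ -/
def neg (A : Fm) : Fm := imp A bot
/-- A ∧ B := ∀X((A → B → X) → X) -/
def conj (A B : Fm) : Fm :=
  all (imp (imp (A.lift 0) (imp (B.lift 0) (var 0))) (var 0))
/-- A ∨ B := ∀X((A → X) → (B → X) → X) -/
def disj (A B : Fm) : Fm :=
  all (imp (imp (A.lift 0) (var 0)) (imp (imp (B.lift 0) (var 0)) (var 0)))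
/-- A ↔ B := (A → B) ∧ (B → A) -/
def iff (A B : Fm) : Fm := conj (imp A B) (imp B A)
/-- ◊A := ∀X(□(A → ■X) → X) -/
def dia (A : Fm) : Fm :=
  all (imp (box (imp (A.lift 0) (bbox (var 0)))) (var 0))
/-- ◆A := ∀X(■(A → □X) → X) -/
def bdia (A : Fm) : Fm :=
  all (imp (bbox (imp (A.lift 0) (box (var 0)))) (var 0))

end Fm

/-- The axiomatization of IKt2 *without* the axioms T_{◊■} (◊■A → A) and
functoriality of ◊ (and their black duals): IPL2 with full comprehension,
□/■-distribution and necessitation, and the adjunction axioms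
◆□A → A and A → ■◊A, with ◊A := ∀X(□(A→■X)→X) and ◆A := ∀X(■(A→□X)→X). -/
inductive ProvR : Fm → Prop where
  | axK (A B : Fm) : ProvR (A.imp (B.imp A))
  | axS (A B C : Fm) :
      ProvR ((A.imp (B.imp C)).imp ((A.imp B).imp (A.imp C)))
  | axAllFun (A B : Fm) :
      ProvR ((Fm.all (A.imp B)).imp ((Fm.all A).imp (Fm.all B)))
  | axV (A : Fm) : ProvR (A.imp (Fm.all (A.lift 0)))
  | axC (A C : Fm) : ProvR ((Fm.all A).imp (A.inst C))
  | mp {A B : Fm} : ProvR (A.imp B) → ProvR A → ProvR B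
  | gen {A : Fm} {P : ℕ} :
      ProvR (A.inst (Fm.pr P)) → ¬ (Fm.all A).occursPr P → ProvR (Fm.all A)
  | axBoxFun (A B : Fm) :
      ProvR ((Fm.box (A.imp B)).imp ((Fm.box A).imp (Fm.box B)))
  | axBboxFun (A B : Fm) :
      ProvR ((Fm.bbox (A.imp B)).imp ((Fm.bbox A).imp (Fm.bbox B)))
  | necBox {A : Fm} : ProvR A → ProvR (Fm.box A)
  | necBbox {A : Fm} : ProvR A → ProvR (Fm.bbox A)
  | axTenseBdiaBox (A : Fm) : ProvR ((Fm.bdia (Fm.box A)).imp A)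
  | axTenseBboxDia (A : Fm) : ProvR (A.imp (Fm.bbox (Fm.dia A)))


theorem subst_lift (B : Fm) : ∀ (c : ℕ) (C : Fm), (B.lift c).subst c C = B := by
  induction B with
  | pr p => intro c C; rfl
  | var n =>
    intro c C
    simp only [Fm.lift, Fm.subst]
    split
    · simp [Fm.subst, *]
    · next h =>
        simp only [Fm.subst]
        rw [if_neg (by omega), if_neg (by omega)]
        simp
  | imp A B ihA ihB => intro c C; simp [Fm.lift, Fm.subst, ihA, ihB]
  | box A ih => intro c C; simp [Fm.lift, Fm.subst, ih]
  | bbox A ih => intro c C; simp [Fm.lift, Fm.subst, ih]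
  | all A ih => intro c C; simp [Fm.lift, Fm.subst, ih]

theorem prov_id (A : Fm) : ProvR (A.imp A) :=
  ProvR.mp (ProvR.mp (ProvR.axS A (A.imp A) A) (ProvR.axK A (A.imp A)))
    (ProvR.axK A A)

/-- From P → (Q → R) and Q, derive P → R. -/
theorem prov_mp2 {P Q R : Fm} (h1 : ProvR (P.imp (Q.imp R))) (h2 : ProvR Q) :
    ProvR (P.imp R) :=
  ProvR.mp (ProvR.mp (ProvR.axS P Q R) h1)
    (ProvR.mp (ProvR.axK Q P) h2)

/-- In IKt2 with ◊A := ∀X(□(A→■X)→X), the half-adjunction ◊■A → A is derivable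
from the remaining axioms, i.e. without the axiom T_{◊■} or ◊-functoriality. -/
theorem dia_bbox_derivable (A : Fm) : ProvR ((Fm.dia (Fm.bbox A)).imp A) := by
  have h := ProvR.axC
    (Fm.imp (Fm.box (Fm.imp ((Fm.bbox A).lift 0) (Fm.bbox (Fm.var 0)))) (Fm.var 0)) A
  simp only [Fm.inst, Fm.subst, subst_lift] at h
  exact prov_mp2 h (ProvR.necBox (prov_id (Fm.bbox A)))

end SOTense
end

section
/- IKt2 proves □∀X A ↔ ∀X □A (both directions: distribution of □ over ∀ and the Barcan-style converse ∀X□A → □∀X A). -/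
namespace SOTense

/-- Hilbert-style provability for second-order tense logic, with defined ◊/◆.
`Prov false` is intuitionistic `IKt2`; `Prov true` is classical `Kt2`
(adding double negation elimination). -/
inductive Prov : Bool → Fm → Prop where
  | axK (cl : Bool) (A B : Fm) : Prov cl (A.imp (B.imp A))
  | axS (cl : Bool) (A B C : Fm) :
      Prov cl ((A.imp (B.imp C)).imp ((A.imp B).imp (A.imp C)))
  | axAllFun (cl : Bool) (A B : Fm) :
      Prov cl ((Fm.all (A.imp B)).imp ((Fm.all A).imp (Fm.all B)))
  | axV (cl : Bool) (A : Fm) : Prov cl (A.imp (Fm.all (A.lift 0)))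
  | axC (cl : Bool) (A C : Fm) : Prov cl ((Fm.all A).imp (A.inst C))
  | mp {cl : Bool} {A B : Fm} : Prov cl (A.imp B) → Prov cl A → Prov cl B
  | gen {cl : Bool} {A : Fm} {P : ℕ} :
      Prov cl (A.inst (Fm.pr P)) → ¬ (Fm.all A).occursPr P → Prov cl (Fm.all A)
  | axBoxFun (cl : Bool) (A B : Fm) :
      Prov cl ((Fm.box (A.imp B)).imp ((Fm.box A).imp (Fm.box B)))
  | axBboxFun (cl : Bool) (A B : Fm) :
      Prov cl ((Fm.bbox (A.imp B)).imp ((Fm.bbox A).imp (Fm.bbox B)))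
  | necBox {cl : Bool} {A : Fm} : Prov cl A → Prov cl (Fm.box A)
  | necBbox {cl : Bool} {A : Fm} : Prov cl A → Prov cl (Fm.bbox A)
  | axTenseBdiaBox (cl : Bool) (A : Fm) : Prov cl ((Fm.bdia (Fm.box A)).imp A)
  | axTenseBoxBdia (cl : Bool) (A : Fm) : Prov cl (A.imp (Fm.box (Fm.bdia A)))
  | axTenseDiaBbox (cl : Bool) (A : Fm) : Prov cl ((Fm.dia (Fm.bbox A)).imp A)
  | axTenseBboxDia (cl : Bool) (A : Fm) : Prov cl (A.imp (Fm.bbox (Fm.dia A)))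
  | axDNE (A : Fm) : Prov true (A.neg.neg.imp A)

/-- Second-order intuitionistic tense logic. -/
def IKt2 (A : Fm) : Prop := Prov false A
/-- Second-order classical tense logic. -/
def Kt2 (A : Fm) : Prop := Prov true A

namespace Fm

theorem subst_lift (A : Fm) : ∀ (k : ℕ) (C : Fm), (A.lift k).subst k C = A := by
  induction A with
  | pr p => intro k C; simp [lift, subst]
  | var n =>
      intro k C
      by_cases h : n < k
      · simp [lift, subst, h]
      · simp [lift, subst, h]
        have h1 : ¬ (n + 1 < k) := by omega
        have h2 : ¬ (n + 1 = k) := by omega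
        simp [subst, h1, h2]
  | imp A B ihA ihB => intro k C; simp [lift, subst, ihA, ihB]
  | box A ih => intro k C; simp [lift, subst, ih]
  | bbox A ih => intro k C; simp [lift, subst, ih]
  | all A ih => intro k C; simp [lift, subst, ih]

theorem occursPr_lift (P : ℕ) (A : Fm) : ∀ k, (A.lift k).occursPr P ↔ A.occursPr P := by
  induction A with
  | pr p => intro k; simp [lift, occursPr]
  | var n => intro k; by_cases h : n < k <;> simp [lift, occursPr, h]
  | imp A B ihA ihB => intro k; simp [lift, occursPr, ihA, ihB]
  | box A ih => intro k; simp [lift, occursPr, ih]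
  | bbox A ih => intro k; simp [lift, occursPr, ih]
  | all A ih => intro k; simp [lift, occursPr, ih]

/-- A bound above which no propositional symbol occurs. -/
def maxPr : Fm → ℕ
  | pr p => p
  | var _ => 0
  | imp A B => max A.maxPr B.maxPr
  | box A => A.maxPr
  | bbox A => A.maxPr
  | all A => A.maxPr

theorem not_occursPr_of_gt {P : ℕ} {A : Fm} (h : A.maxPr < P) : ¬ A.occursPr P := by
  induction A with
  | pr p => simp [maxPr] at h; simp [occursPr]; omega
  | var n => simp [occursPr]
  | imp A B ihA ihB =>
      simp [maxPr] at h
      simp [occursPr]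
      exact ⟨ihA h.1, ihB h.2⟩
  | box A ih => exact ih h
  | bbox A ih => exact ih h
  | all A ih => exact ih h

end Fm

namespace Prov

theorem imp_id (cl : Bool) (A : Fm) : Prov cl (A.imp A) :=
  mp (mp (axS cl A (A.imp A) A) (axK cl A (A.imp A))) (axK cl A A)

theorem imp_trans {cl : Bool} {A B C : Fm}
    (h1 : Prov cl (A.imp B)) (h2 : Prov cl (B.imp C)) : Prov cl (A.imp C) :=
  mp (mp (axS cl A B C) (mp (axK cl (B.imp C) A) h2)) h1

/-- From ⊢ D → B derive ⊢ (B → C) → (D → C). -/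
theorem imp_left {cl : Bool} {B C D : Fm} (h : Prov cl (D.imp B)) :
    Prov cl ((B.imp C).imp (D.imp C)) := by
  have t : Prov cl ((B.imp C).imp (D.imp (B.imp C))) := axK cl (B.imp C) D
  have t2 : Prov cl ((B.imp C).imp ((D.imp B).imp (D.imp C))) :=
    imp_trans t (axS cl D B C)
  have u : Prov cl ((B.imp C).imp (D.imp B)) := mp (axK cl (D.imp B) (B.imp C)) h
  exact mp (mp (axS cl (B.imp C) (D.imp B) (D.imp C)) t2) u

/-- From ⊢ A → (B → C) and ⊢ D → B derive ⊢ A → (D → C). -/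
theorem comp2 {cl : Bool} {A B C D : Fm}
    (h1 : Prov cl (A.imp (B.imp C))) (h2 : Prov cl (D.imp B)) :
    Prov cl (A.imp (D.imp C)) :=
  imp_trans h1 (imp_left h2)

/-- From ⊢ X derive ⊢ (X → Z) → Z. -/
theorem ap {cl : Bool} {X : Fm} (hX : Prov cl X) (Z : Fm) :
    Prov cl ((X.imp Z).imp Z) :=
  mp (mp (axS cl (X.imp Z) X Z) (imp_id cl (X.imp Z))) (mp (axK cl X (X.imp Z)) hX)

theorem mono_box {cl : Bool} {A B : Fm} (h : Prov cl (A.imp B)) :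
    Prov cl ((Fm.box A).imp (Fm.box B)) :=
  mp (axBoxFun cl A B) (necBox h)

theorem mono_bbox {cl : Bool} {A B : Fm} (h : Prov cl (A.imp B)) :
    Prov cl ((Fm.bbox A).imp (Fm.bbox B)) :=
  mp (axBboxFun cl A B) (necBbox h)

/-- If ⊢ H → D[P/X] for a P fresh in H and D, then ⊢ H → ∀X D. -/
theorem all_intro_imp {cl : Bool} {H D : Fm} {P : ℕ}
    (h : Prov cl (H.imp (D.inst (Fm.pr P))))
    (fH : ¬ H.occursPr P) (fD : ¬ D.occursPr P) :
    Prov cl (H.imp (Fm.all D)) := by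
  have hg : Prov cl (Fm.all ((H.lift 0).imp D)) := by
    apply Prov.gen (P := P)
    · have e : ((H.lift 0).imp D).inst (Fm.pr P) = H.imp (D.inst (Fm.pr P)) := by
        simp [Fm.inst, Fm.subst, Fm.subst_lift]
      rw [e]; exact h
    · simp [Fm.occursPr, Fm.occursPr_lift]
      exact ⟨fH, fD⟩
  exact imp_trans (Prov.axV cl H) (Prov.mp (Prov.axAllFun cl (H.lift 0) D) hg)

/-- ◆ is monotone. -/
theorem mono_bdia {cl : Bool} {B C : Fm} (h : Prov cl (B.imp C)) :
    Prov cl ((Fm.bdia B).imp (Fm.bdia C)) := by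
  set P : ℕ := max B.maxPr C.maxPr + 1 with hP
  have fB : ¬ B.occursPr P := Fm.not_occursPr_of_gt (by omega)
  have fC : ¬ C.occursPr P := Fm.not_occursPr_of_gt (by omega)
  -- body of ◆C
  set GC : Fm := (Fm.bbox ((C.lift 0).imp (Fm.box (Fm.var 0)))).imp (Fm.var 0) with hGC
  have hinst : GC.inst (Fm.pr P)
      = (Fm.bbox (C.imp (Fm.box (Fm.pr P)))).imp (Fm.pr P) := by
    simp [hGC, Fm.inst, Fm.subst, Fm.subst_lift]
  have h1 : Prov cl ((Fm.bdia B).imp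
      ((Fm.bbox (B.imp (Fm.box (Fm.pr P)))).imp (Fm.pr P))) := by
    have := Prov.axC cl ((Fm.bbox ((B.lift 0).imp (Fm.box (Fm.var 0)))).imp (Fm.var 0))
      (Fm.pr P)
    simpa [Fm.bdia, Fm.inst, Fm.subst, Fm.subst_lift] using this
  have h2 : Prov cl ((Fm.bbox (C.imp (Fm.box (Fm.pr P)))).imp
      (Fm.bbox (B.imp (Fm.box (Fm.pr P))))) :=
    mono_bbox (imp_left h)
  have h3 : Prov cl ((Fm.bdia B).imp (GC.inst (Fm.pr P))) := by
    rw [hinst]; exact comp2 h1 h2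
  have : Prov cl ((Fm.bdia B).imp (Fm.all GC)) := by
    apply all_intro_imp h3
    · simp [Fm.bdia, Fm.occursPr, Fm.occursPr_lift]; exact fB
    · simp [hGC, Fm.occursPr, Fm.occursPr_lift]; exact fC
  exact this

/-- Introduction for the defined conjunction. -/
theorem conj_intro {cl : Bool} {X Y : Fm} (hX : Prov cl X) (hY : Prov cl Y) :
    Prov cl (X.conj Y) := by
  set P : ℕ := max X.maxPr Y.maxPr + 1 with hP
  have fX : ¬ X.occursPr P := Fm.not_occursPr_of_gt (by omega)
  have fY : ¬ Y.occursPr P := Fm.not_occursPr_of_gt (by omega)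
  apply Prov.gen (P := P)
  · have e : (((X.lift 0).imp ((Y.lift 0).imp (Fm.var 0))).imp (Fm.var 0)).inst (Fm.pr P)
        = (X.imp (Y.imp (Fm.pr P))).imp (Fm.pr P) := by
      simp [Fm.inst, Fm.subst, Fm.subst_lift]
    rw [e]
    exact imp_trans (ap hX (Y.imp (Fm.pr P))) (ap hY (Fm.pr P))
  · simp [Fm.occursPr, Fm.occursPr_lift]
    exact ⟨fX, fY⟩

end Prov

/-- IKt2 proves □∀X A ↔ ∀X □A (distribution of □ over ∀ together with the
Barcan-style converse ∀X□A → □∀X A). -/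
theorem box_all_iff_all_box (A : Fm) :
    IKt2 ((Fm.box (Fm.all A)).iff (Fm.all (Fm.box A))) := by
  set P : ℕ := A.maxPr + 1 with hP
  have fA : ¬ A.occursPr P := Fm.not_occursPr_of_gt (by omega)
  -- Direction 1: □∀A → ∀□A
  have dir1 : Prov false ((Fm.box (Fm.all A)).imp (Fm.all (Fm.box A))) := by
    apply Prov.all_intro_imp (P := P)
    · have h1 : Prov false ((Fm.box (Fm.all A)).imp (Fm.box (A.inst (Fm.pr P)))) :=
        Prov.mono_box (Prov.axC false A (Fm.pr P))
      simpa [Fm.inst, Fm.subst] using h1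
    · simpa [Fm.occursPr] using fA
    · simpa [Fm.occursPr] using fA
  -- Direction 2: ∀□A → □∀A (Barcan)
  have dir2 : Prov false ((Fm.all (Fm.box A)).imp (Fm.box (Fm.all A))) := by
    have h1 : Prov false ((Fm.all (Fm.box A)).imp (Fm.box (A.inst (Fm.pr P)))) := by
      have := Prov.axC false (Fm.box A) (Fm.pr P)
      simpa [Fm.inst, Fm.subst] using this
    have h2 : Prov false ((Fm.bdia (Fm.all (Fm.box A))).imp (A.inst (Fm.pr P))) :=
      Prov.imp_trans (Prov.mono_bdia h1) (Prov.axTenseBdiaBox false (A.inst (Fm.pr P)))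
    have h3 : Prov false ((Fm.bdia (Fm.all (Fm.box A))).imp (Fm.all A)) := by
      apply Prov.all_intro_imp h2
      · simpa [Fm.bdia, Fm.occursPr, Fm.occursPr_lift] using fA
      · exact fA
    exact Prov.imp_trans (Prov.axTenseBoxBdia false (Fm.all (Fm.box A)))
      (Prov.mono_box h3)
  exact Prov.conj_intro dir1 dir2

end SOTense
end

section
/- IKt2 proves the Fischer Servi axiom (◊A → □B) → □(A→B), where ◊A := ∀X(□(A→■X)→X). -/
namespace SOTense

theorem subst_lift_s7 (A : Fm) : ∀ (k : ℕ) (C : Fm), (A.lift k).subst k C = A := by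
  induction A with
  | pr p => intro k C; rfl
  | var n =>
      intro k C
      simp only [Fm.lift]
      by_cases h : n < k
      · simp [Fm.subst, h]
      · simp only [if_neg h, Fm.subst]
        have h1 : ¬ (n + 1 < k) := by omega
        have h2 : ¬ (n + 1 = k) := by omega
        simp [h1, h2]
  | imp A B ihA ihB => intro k C; simp [Fm.lift, Fm.subst, ihA, ihB]
  | box A ih => intro k C; simp [Fm.lift, Fm.subst, ih]
  | bbox A ih => intro k C; simp [Fm.lift, Fm.subst, ih]
  | all A ih => intro k C; simp [Fm.lift, Fm.subst, ih]

theorem imp_id {cl : Bool} (A : Fm) : Prov cl (A.imp A) :=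
  Prov.mp (Prov.mp (Prov.axS cl A (A.imp A) A) (Prov.axK cl A (A.imp A)))
    (Prov.axK cl A A)

theorem imp_trans {cl : Bool} {A B C : Fm} (h1 : Prov cl (A.imp B))
    (h2 : Prov cl (B.imp C)) : Prov cl (A.imp C) :=
  Prov.mp (Prov.mp (Prov.axS cl A B C) (Prov.mp (Prov.axK cl (B.imp C) A) h2)) h1

theorem imp_flip {cl : Bool} {A B C : Fm} (h : Prov cl (A.imp (B.imp C))) :
    Prov cl (B.imp (A.imp C)) :=
  imp_trans (Prov.axK cl B A) (Prov.mp (Prov.axS cl A B C) h)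

/-- IKt2 proves the Fischer Servi axiom (◊A → □B) → □(A→B),
where ◊A := ∀X(□(A→■X)→X). -/
theorem fischer_servi (A B : Fm) :
    IKt2 (((Fm.dia A).imp (Fm.box B)).imp (Fm.box (A.imp B))) := by
  set C : Fm := (Fm.dia A).imp (Fm.box B) with hC
  -- step 1: ◊A → (C → □B)
  have h1 : Prov false ((Fm.dia A).imp (C.imp (Fm.box B))) :=
    imp_flip (imp_id C)
  -- step 3: A → ■(C → □B)
  have h3 : Prov false (A.imp (Fm.bbox (C.imp (Fm.box B)))) :=
    imp_trans (Prov.axTenseBboxDia false A)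
      (Prov.mp (Prov.axBboxFun false (Fm.dia A) (C.imp (Fm.box B)))
        (Prov.necBbox h1))
  -- step 4: ◆C → (■(C → □B) → B)
  have h4 : Prov false ((Fm.bdia C).imp
      ((Fm.bbox (C.imp (Fm.box B))).imp B)) := by
    have := Prov.axC false
      (Fm.imp (Fm.bbox (Fm.imp (C.lift 0) (Fm.box (Fm.var 0)))) (Fm.var 0)) B
    simpa [Fm.bdia, Fm.inst, Fm.subst, subst_lift_s7] using this
  -- step 5/6: ◆C → (A → B)
  have h6 : Prov false ((Fm.bdia C).imp (A.imp B)) :=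
    imp_flip (imp_trans h3 (imp_flip h4))
  -- step 7: □◆C → □(A→B)
  have h7 : Prov false ((Fm.box (Fm.bdia C)).imp (Fm.box (A.imp B))) :=
    Prov.mp (Prov.axBoxFun false (Fm.bdia C) (A.imp B)) (Prov.necBox h6)
  exact imp_trans (Prov.axTenseBoxBdia false C) h7

end SOTense
end

section
/- Soundness of IKt2 for birelational models: if A is a theorem of IKt2 then A is forced at every world of every comprehensive birelational structure. -/
namespace SOTense

/-- A two-sorted birelational structure: a poset of worlds, a class of
upwards-closed sets interpreting propositional symbols and second-order
variables, and an accessibility relation which is a bisimulation for ≤. -/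
structure Birel where
  W : Type
  le : W → W → Prop
  le_refl : ∀ v, le v v
  le_trans : ∀ u v w, le u v → le v w → le u w
  le_antisymm : ∀ v w, le v w → le w v → v = w
  Sets : Set (Set W)
  upclosed : ∀ V ∈ Sets, ∀ v v', le v v' → v ∈ V → v' ∈ V
  ip : ℕ → Set W
  ip_mem : ∀ P, ip P ∈ Sets
  R : W → W → Prop
  forth : ∀ v w w', R v w → le w w' → ∃ v', le v v' ∧ R v' w'
  back : ∀ v v' w, le v v' → R v w → ∃ w', le w w' ∧ R v' w'

/-- Extend an environment with a new value for de Bruijn variable 0. -/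
def cons {α : Type*} (x : α) (η : ℕ → α) : ℕ → α
  | 0 => x
  | n + 1 => η n

/-- Forcing of a formula at a world of a birelational structure, relative to an
environment interpreting the free second-order variables by sets of the
structure (this realises the "expanded language" with set constants). -/
def Birel.sat (B : Birel) : (ℕ → Set B.W) → B.W → Fm → Prop
  | _, v, .pr P => v ∈ B.ip P
  | η, v, .var n => v ∈ η n
  | η, v, .imp A C => ∀ v', B.le v v' → B.sat η v' A → B.sat η v' C
  | η, v, .box A => ∀ v' w', B.le v v' → B.R v' w' → B.sat η w' A
  | η, v, .bbox A => ∀ v' u', B.le v v' → B.R u' v' → B.sat η u' A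
  | η, v, .all A => ∀ v', B.le v v' → ∀ V ∈ B.Sets, B.sat (cons V η) v' A

/-- A birelational structure is comprehensive if the extension of every formula
(of the expanded language, i.e. relative to every environment valued in the
class of sets) belongs to its class of sets. -/
def Birel.comprehensive (B : Birel) : Prop :=
  ∀ (A : Fm) (η : ℕ → Set B.W), (∀ n, η n ∈ B.Sets) →
    {w | B.sat η w A} ∈ B.Sets

/-! ### Auxiliary development for soundness -/

/-- Insert a value at position k in an environment. -/
def insertEnv {α : Type*} (k : ℕ) (V : α) (η : ℕ → α) : ℕ → α :=
  fun n => if n < k then η n else if n = k then V else η (n - 1)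

lemma insertEnv_zero {α : Type*} (V : α) (η : ℕ → α) :
    insertEnv 0 V η = cons V η := by
  funext n
  cases n with
  | zero => simp [insertEnv, cons]
  | succ n => simp [insertEnv, cons]

lemma cons_insertEnv {α : Type*} (k : ℕ) (V W : α) (η : ℕ → α) :
    cons W (insertEnv k V η) = insertEnv (k + 1) V (cons W η) := by
  funext n
  cases n with
  | zero => simp [insertEnv, cons]
  | succ n =>
    simp only [insertEnv, cons]
    by_cases h1 : n < k
    · simp [h1, Nat.succ_lt_succ h1, cons]
    · by_cases h2 : n = k
      · simp [h1, h2, cons]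
      · have h3 : ¬ n + 1 < k + 1 := by omega
        have h4 : ¬ n + 1 = k + 1 := by omega
        have h5 : n ≥ 1 := by omega
        simp only [h1, h2, h3, h4, if_false]
        obtain ⟨m, rfl⟩ : ∃ m, n = m + 1 := ⟨n - 1, by omega⟩
        simp [cons]

lemma cons_mem {B : Birel} {η : ℕ → Set B.W} (hη : ∀ n, η n ∈ B.Sets)
    {V : Set B.W} (hV : V ∈ B.Sets) : ∀ n, cons V η n ∈ B.Sets := by
  intro n; cases n with
  | zero => exact hV
  | succ n => exact hη n

lemma insertEnv_mem {B : Birel} {η : ℕ → Set B.W} (hη : ∀ n, η n ∈ B.Sets)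
    {V : Set B.W} (hV : V ∈ B.Sets) (k : ℕ) : ∀ n, insertEnv k V η n ∈ B.Sets := by
  intro n; unfold insertEnv; split_ifs <;> first | exact hη _ | exact hV

/-- Monotonicity of forcing with respect to ≤. -/
lemma sat_mono (B : Birel) {η : ℕ → Set B.W} (hη : ∀ n, η n ∈ B.Sets)
    {v v' : B.W} (h : B.le v v') : ∀ A : Fm, B.sat η v A → B.sat η v' A := by
  intro A
  cases A with
  | pr p => exact fun hv => B.upclosed _ (B.ip_mem p) _ _ h hv
  | var n => exact fun hv => B.upclosed _ (hη n) _ _ h hv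
  | imp A C => exact fun hv u hu => hv u (B.le_trans _ _ _ h hu)
  | box A => exact fun hv u w hu => hv u w (B.le_trans _ _ _ h hu)
  | bbox A => exact fun hv u w hu => hv u w (B.le_trans _ _ _ h hu)
  | all A => exact fun hv u hu => hv u (B.le_trans _ _ _ h hu)

/-- Semantics of lifting: lifting shifts the environment. -/
lemma sat_lift (B : Birel) :
    ∀ (A : Fm) (c : ℕ) (η : ℕ → Set B.W) (v : B.W),
      B.sat η v (A.lift c) ↔ B.sat (fun n => η (if n < c then n else n + 1)) v A := by
  intro A
  induction A with
  | pr p => intro c η v; simp [Fm.lift, Birel.sat]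
  | var n =>
    intro c η v
    simp only [Fm.lift]
    by_cases h : n < c <;> simp [h, Birel.sat]
  | imp A C ihA ihC =>
    intro c η v
    simp only [Fm.lift, Birel.sat]
    constructor
    · intro h u hu hA; exact (ihC c η u).1 (h u hu ((ihA c η u).2 hA))
    · intro h u hu hA; exact (ihC c η u).2 (h u hu ((ihA c η u).1 hA))
  | box A ih =>
    intro c η v
    simp only [Fm.lift, Birel.sat]
    constructor
    · intro h u w hu hr; exact (ih c η w).1 (h u w hu hr)
    · intro h u w hu hr; exact (ih c η w).2 (h u w hu hr)
  | bbox A ih =>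
    intro c η v
    simp only [Fm.lift, Birel.sat]
    constructor
    · intro h u w hu hr; exact (ih c η w).1 (h u w hu hr)
    · intro h u w hu hr; exact (ih c η w).2 (h u w hu hr)
  | all A ih =>
    intro c η v
    simp only [Fm.lift, Birel.sat]
    have key : ∀ V : Set B.W,
        (fun n => cons V η (if n < c + 1 then n else n + 1)) =
          cons V (fun n => η (if n < c then n else n + 1)) := by
      intro V
      funext n
      cases n with
      | zero => simp [cons]
      | succ n =>
        by_cases h : n < c
        · simp [cons, h, Nat.succ_lt_succ h]
        · have h' : ¬ n + 1 < c + 1 := by omega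
          simp [cons, h, h']
    constructor
    · intro h u hu V hV
      have := (ih (c + 1) (cons V η) u).1 (h u hu V hV)
      rwa [key V] at this
    · intro h u hu V hV
      apply (ih (c + 1) (cons V η) u).2
      rw [key V]
      exact h u hu V hV

lemma sat_lift_zero (B : Birel) (A : Fm) (V : Set B.W) (η : ℕ → Set B.W) (v : B.W) :
    B.sat (cons V η) v (A.lift 0) ↔ B.sat η v A := by
  rw [sat_lift]
  have : (fun n => cons V η (if n < 0 then n else n + 1)) = η := by
    funext n; simp [cons]
  rw [this]

/-- Semantics of substitution. -/
lemma sat_subst (B : Birel) :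
    ∀ (A : Fm) (k : ℕ) (C : Fm) (η : ℕ → Set B.W) (v : B.W),
      B.sat η v (A.subst k C) ↔
        B.sat (insertEnv k {w | B.sat η w C} η) v A := by
  intro A
  induction A with
  | pr p => intro k C η v; simp [Fm.subst, Birel.sat]
  | var n =>
    intro k C η v
    simp only [Fm.subst]
    by_cases h1 : n < k
    · simp [h1, Birel.sat, insertEnv]
    · by_cases h2 : n = k
      · simp [h1, h2, Birel.sat, insertEnv, Set.mem_setOf_eq]
      · simp [h1, h2, Birel.sat, insertEnv]
  | imp A C ihA ihC =>
    intro k C₀ η v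
    simp only [Fm.subst, Birel.sat]
    constructor
    · intro h u hu hA; exact (ihC k C₀ η u).1 (h u hu ((ihA k C₀ η u).2 hA))
    · intro h u hu hA; exact (ihC k C₀ η u).2 (h u hu ((ihA k C₀ η u).1 hA))
  | box A ih =>
    intro k C η v
    simp only [Fm.subst, Birel.sat]
    constructor
    · intro h u w hu hr; exact (ih k C η w).1 (h u w hu hr)
    · intro h u w hu hr; exact (ih k C η w).2 (h u w hu hr)
  | bbox A ih =>
    intro k C η v
    simp only [Fm.subst, Birel.sat]
    constructor
    · intro h u w hu hr; exact (ih k C η w).1 (h u w hu hr)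
    · intro h u w hu hr; exact (ih k C η w).2 (h u w hu hr)
  | all A ih =>
    intro k C η v
    simp only [Fm.subst, Birel.sat]
    have key : ∀ V : Set B.W,
        insertEnv (k + 1) {w | B.sat (cons V η) w (C.lift 0)} (cons V η) =
          cons V (insertEnv k {w | B.sat η w C} η) := by
      intro V
      have hset : {w | B.sat (cons V η) w (C.lift 0)} = {w | B.sat η w C} := by
        ext w; exact sat_lift_zero B C V η w
      rw [hset, cons_insertEnv]
    constructor
    · intro h u hu V hV
      have := (ih (k + 1) (C.lift 0) (cons V η) u).1 (h u hu V hV)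
      rwa [key V] at this
    · intro h u hu V hV
      apply (ih (k + 1) (C.lift 0) (cons V η) u).2
      rw [key V]
      exact h u hu V hV

lemma sat_inst (B : Birel) (A C : Fm) (η : ℕ → Set B.W) (v : B.W) :
    B.sat η v (A.inst C) ↔ B.sat (cons {w | B.sat η w C} η) v A := by
  rw [Fm.inst, sat_subst, insertEnv_zero]

/-- Modify the interpretation of one propositional symbol. -/
def Birel.updIP (B : Birel) (P : ℕ) (V : Set B.W) (hV : V ∈ B.Sets) : Birel :=
  { B with
    ip := fun Q => if Q = P then V else B.ip Q
    ip_mem := by intro Q; by_cases h : Q = P <;> simp [h, hV, B.ip_mem] }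

/-- Abstract a propositional symbol into a fresh de Bruijn variable at depth k. -/
def abstr (P : ℕ) : ℕ → Fm → Fm
  | k, .pr p => if p = P then .var k else .pr p
  | k, .var n => if n < k then .var n else .var (n + 1)
  | k, .imp A C => .imp (abstr P k A) (abstr P k C)
  | k, .box A => .box (abstr P k A)
  | k, .bbox A => .bbox (abstr P k A)
  | k, .all A => .all (abstr P (k + 1) A)

lemma sat_updIP (B : Birel) (P : ℕ) (V : Set B.W) (hV : V ∈ B.Sets) :
    ∀ (A : Fm) (k : ℕ) (η : ℕ → Set B.W) (v : B.W),
      (B.updIP P V hV).sat η v A ↔ B.sat (insertEnv k V η) v (abstr P k A) := by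
  intro A
  induction A with
  | pr p =>
    intro k η v
    by_cases h : p = P
    · have : insertEnv k V η k = V := by simp [insertEnv]
      simp [Birel.sat, Birel.updIP, abstr, h, this]; exact Iff.rfl
    · simp [Birel.sat, Birel.updIP, abstr, h]; exact Iff.rfl
  | var n =>
    intro k η v
    simp only [abstr]
    by_cases h : n < k
    · simp [h, Birel.sat, Birel.updIP, insertEnv]; exact Iff.rfl
    · have h3 : ¬ n + 1 < k := by omega
      have h4 : ¬ n + 1 = k := by omega
      simp [h, h3, h4, Birel.sat, Birel.updIP, insertEnv]; exact Iff.rfl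
  | imp A C ihA ihC =>
    intro k η v
    simp only [abstr, Birel.sat]
    constructor
    · intro h u hu hA; exact (ihC k η u).1 (h u hu ((ihA k η u).2 hA))
    · intro h u hu hA; exact (ihC k η u).2 (h u hu ((ihA k η u).1 hA))
  | box A ih =>
    intro k η v
    simp only [abstr, Birel.sat]
    constructor
    · intro h u w hu hr; exact (ih k η w).1 (h u w hu hr)
    · intro h u w hu hr; exact (ih k η w).2 (h u w hu hr)
  | bbox A ih =>
    intro k η v
    simp only [abstr, Birel.sat]
    constructor
    · intro h u w hu hr; exact (ih k η w).1 (h u w hu hr)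
    · intro h u w hu hr; exact (ih k η w).2 (h u w hu hr)
  | all A ih =>
    intro k η v
    simp only [abstr, Birel.sat]
    constructor
    · intro h u hu W hW
      have := (ih (k + 1) (cons W η) u).1 (h u hu W hW)
      rwa [← cons_insertEnv] at this
    · intro h u hu W hW
      apply (ih (k + 1) (cons W η) u).2
      have e := h u hu W hW
      exact cast (congrArg (fun e => B.sat e u (abstr P (k + 1) A)) (cons_insertEnv k V W η)) e

lemma updIP_comprehensive (B : Birel) (hB : B.comprehensive)
    (P : ℕ) (V : Set B.W) (hV : V ∈ B.Sets) :
    (B.updIP P V hV).comprehensive := by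
  intro A η hη
  have : {w | (B.updIP P V hV).sat η w A} =
      {w | B.sat (insertEnv 0 V η) w (abstr P 0 A)} := by
    ext w; exact sat_updIP B P V hV A 0 η w
  rw [this]
  exact hB _ _ (insertEnv_mem hη hV 0)

/-- If P does not occur in A, then reinterpreting P does not change forcing. -/
lemma sat_updIP_not_occurs (B : Birel) (P : ℕ) (V : Set B.W) (hV : V ∈ B.Sets) :
    ∀ (A : Fm), ¬ A.occursPr P → ∀ (η : ℕ → Set B.W) (v : B.W),
      ((B.updIP P V hV).sat η v A ↔ B.sat η v A) := by
  intro A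
  induction A with
  | pr p =>
    intro hocc η v
    have h : ¬ p = P := fun h => hocc h
    simp [Birel.sat, Birel.updIP, h]; exact Iff.rfl
  | var n => intro _ η v; simp [Birel.sat, Birel.updIP]; exact Iff.rfl
  | imp A C ihA ihC =>
    intro hocc η v
    have hA := ihA (fun h => hocc (Or.inl h))
    have hC := ihC (fun h => hocc (Or.inr h))
    simp only [Birel.sat]
    constructor
    · intro h u hu ha; exact (hC η u).1 (h u hu ((hA η u).2 ha))
    · intro h u hu ha; exact (hC η u).2 (h u hu ((hA η u).1 ha))
  | box A ih =>
    intro hocc η v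
    have hA := ih hocc
    simp only [Birel.sat]
    constructor
    · intro h u w hu hr; exact (hA η w).1 (h u w hu hr)
    · intro h u w hu hr; exact (hA η w).2 (h u w hu hr)
  | bbox A ih =>
    intro hocc η v
    have hA := ih hocc
    simp only [Birel.sat]
    constructor
    · intro h u w hu hr; exact (hA η w).1 (h u w hu hr)
    · intro h u w hu hr; exact (hA η w).2 (h u w hu hr)
  | all A ih =>
    intro hocc η v
    have hA := ih hocc
    simp only [Birel.sat]
    constructor
    · intro h u hu W hW; exact (hA (cons W η) u).1 (h u hu W hW)
    · intro h u hu W hW; exact (hA (cons W η) u).2 (h u hu W hW)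

lemma prov_sound : ∀ {cl : Bool} {A : Fm}, Prov cl A → cl = false →
    ∀ B : Birel, B.comprehensive →
      ∀ η : ℕ → Set B.W, (∀ n, η n ∈ B.Sets) → ∀ v, B.sat η v A := by
  intro cl A h
  induction h with
  | axK cl A B =>
    intro _ M _ η hη v
    intro v₁ h₁ hA v₂ h₂ _
    exact sat_mono M hη h₂ A hA
  | axS cl A B C =>
    intro _ M _ η hη v
    intro v₁ _ h₁ v₂ h₂ h₂' v₃ h₃ hA
    exact h₁ v₃ (M.le_trans _ _ _ h₂ h₃) hA v₃ (M.le_refl _)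
      (h₂' v₃ h₃ hA)
  | axAllFun cl A B =>
    intro _ M _ η hη v
    intro v₁ _ h₁ v₂ h₂ h₂' v₃ h₃ V hV
    exact h₁ v₃ (M.le_trans _ _ _ h₂ h₃) V hV v₃ (M.le_refl _)
      (h₂' v₃ h₃ V hV)
  | axV cl A =>
    intro _ M _ η hη v
    intro v₁ _ hA v₂ h₂ V hV
    rw [sat_lift_zero]
    exact sat_mono M hη h₂ A hA
  | axC cl A C =>
    intro _ M hM η hη v
    intro v₁ _ hall
    rw [sat_inst]
    exact hall v₁ (M.le_refl _) _ (hM C η hη)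
  | mp hAB hA ihAB ihA =>
    intro hcl M hM η hη v
    exact ihAB hcl M hM η hη v v (M.le_refl _) (ihA hcl M hM η hη v)
  | @gen cl A P hP hnocc ih =>
    intro hcl M hM η hη v
    intro v₁ _ V hV
    have hM' := updIP_comprehensive M hM P V hV
    have := ih hcl (M.updIP P V hV) hM' η hη v₁
    replace this := (sat_inst _ _ _ _ _).1 this
    have hext : {w | (M.updIP P V hV).sat η w (Fm.pr P)} = V := by
      ext w; simp [Birel.sat, Birel.updIP]; exact Iff.rfl
    rw [hext] at this
    have hocc : ¬ A.occursPr P := hnocc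
    exact (sat_updIP_not_occurs M P V hV A hocc (cons V η) v₁).1 this
  | axBoxFun cl A B =>
    intro _ M _ η hη v
    intro v₁ _ h₁ v₂ h₂ h₂' v₃ w₃ h₃ hr
    exact h₁ v₃ w₃ (M.le_trans _ _ _ h₂ h₃) hr w₃ (M.le_refl _)
      (h₂' v₃ w₃ h₃ hr)
  | axBboxFun cl A B =>
    intro _ M _ η hη v
    intro v₁ _ h₁ v₂ h₂ h₂' v₃ w₃ h₃ hr
    exact h₁ v₃ w₃ (M.le_trans _ _ _ h₂ h₃) hr w₃ (M.le_refl _)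
      (h₂' v₃ w₃ h₃ hr)
  | necBox hA ih =>
    intro hcl M hM η hη v
    intro v₁ w₁ _ _
    exact ih hcl M hM η hη w₁
  | necBbox hA ih =>
    intro hcl M hM η hη v
    intro v₁ w₁ _ _
    exact ih hcl M hM η hη w₁
  | axTenseBdiaBox cl A =>
    intro _ M hM η hη v
    intro v₁ h₁ hbd
    set V : Set M.W := {w | M.sat η w A} with hVdef
    have hV : V ∈ M.Sets := hM A η hη
    have key := hbd v₁ (M.le_refl _) V hV v₁ (M.le_refl _)
    apply key
    -- show bbox ((box A).lift 0 → box (var 0))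
    intro v₂ u₂ h₂ hr u₃ h₃ hbox
    rw [sat_lift_zero] at hbox
    intro a b ha hrab
    exact hbox a b ha hrab
  | axTenseBoxBdia cl A =>
    intro _ M hM η hη v
    intro v₁ h₁ hA v₂ w₂ h₂ hr
    -- show bdia A at w₂, where R v₂ w₂, v₁ ≤ v₂, sat η v₁ A
    intro w₃ h₃ V hV w₄ h₄ hbb
    -- hbb : bbox ((A.lift 0) → box (var 0)) at w₄ in env cons V η
    have hw : M.le w₂ w₄ := M.le_trans _ _ _ h₃ h₄
    obtain ⟨v₃, hv₃, hr₃⟩ := M.forth v₂ w₂ w₄ hr hw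
    have := hbb w₄ v₃ (M.le_refl _) hr₃ v₃ (M.le_refl _)
    have hA₃ : M.sat (cons V η) v₃ (A.lift 0) := by
      rw [sat_lift_zero]
      exact sat_mono M hη (M.le_trans _ _ _ h₂ hv₃) A hA
    exact this hA₃ v₃ w₄ (M.le_refl _) hr₃
  | axTenseDiaBbox cl A =>
    intro _ M hM η hη v
    intro v₁ h₁ hd
    set V : Set M.W := {w | M.sat η w A} with hVdef
    have hV : V ∈ M.Sets := hM A η hη
    have key := hd v₁ (M.le_refl _) V hV v₁ (M.le_refl _)
    apply key
    -- show box ((bbox A).lift 0 → bbox (var 0))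
    intro a b ha hrab b' hb' hbb
    rw [sat_lift_zero] at hbb
    intro c d hc hrdc
    exact hbb c d hc hrdc
  | axTenseBboxDia cl A =>
    intro _ M hM η hη v
    intro v₁ h₁ hA v₂ u₂ h₂ hr
    -- show dia A at u₂ where R u₂ v₂
    intro u₃ h₃ V hV u₄ h₄ hbox
    have hu : M.le u₂ u₄ := M.le_trans _ _ _ h₃ h₄
    obtain ⟨w₄, hw₄, hr₄⟩ := M.back u₂ u₄ v₂ hu hr
    have := hbox u₄ w₄ (M.le_refl _) hr₄ w₄ (M.le_refl _)
    have hA₄ : M.sat (cons V η) w₄ (A.lift 0) := by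
      rw [sat_lift_zero]
      exact sat_mono M hη (M.le_trans _ _ _ h₂ hw₄) A hA
    exact this hA₄ w₄ u₄ (M.le_refl _) hr₄
  | axDNE A => intro hcl; simp at hcl

/-- Soundness of IKt2 for birelational models: every theorem of IKt2 is forced
at every world of every comprehensive birelational structure. -/
theorem birel_soundness (A : Fm) (h : IKt2 A) :
    ∀ B : Birel, B.comprehensive →
      ∀ η : ℕ → Set B.W, (∀ n, η n ∈ B.Sets) → ∀ v, B.sat η v A :=
  prov_sound h rfl

end SOTense
end

section
/- Equivalence of predicate structures and their birelational collapse: for every formula A(X₁,…,Xₙ) with all free variables displayed and predicates V₁,…,Vₙ of a predicate structure P, the pair (a,v) forces A(V₁↑,…,Vₙ↑) in the birelational collapse of P if and only if a,v forces A(V₁,…,Vₙ) in P. -/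
namespace SOTense

/-- A two-sorted predicate structure: a poset Ω of intuitionistic worlds, a set
W of modal worlds, a set of modal predicates with monotone interpretations,
interpretations of propositional symbols among the predicates, and a monotone
family of accessibility relations. -/
structure PredStr where
  Ω : Type
  le : Ω → Ω → Prop
  le_refl : ∀ a, le a a
  le_trans : ∀ a b c, le a b → le b c → le a c
  le_antisymm : ∀ a b, le a b → le b a → a = b
  W : Type
  Pred : Type
  ip : Pred → Ω → Set W
  ip_mono : ∀ V a b, le a b → ip V a ⊆ ip V b
  prI : ℕ → Pred
  R : Ω → W → W → Prop
  R_mono : ∀ a b, le a b → ∀ v w, R a v w → R b v w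

/-- Satisfaction a,v ⊨ A in a predicate structure, relative to an environment
interpreting free second-order variables by predicates. -/
def PredStr.sat (P : PredStr) : (ℕ → P.Pred) → P.Ω → P.W → Fm → Prop
  | _, a, v, .pr p => v ∈ P.ip (P.prI p) a
  | η, a, v, .var n => v ∈ P.ip (η n) a
  | η, a, v, .imp A B => ∀ b, P.le a b → P.sat η b v A → P.sat η b v B
  | η, a, v, .box A => ∀ b, P.le a b → ∀ w, P.R b v w → P.sat η b w A
  | η, a, v, .bbox A => ∀ b, P.le a b → ∀ u, P.R b u v → P.sat η b u A
  | η, a, v, .all A => ∀ b, P.le a b → ∀ V : P.Pred, P.sat (cons V η) b v A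

/-- The order of the birelational collapse: (a,v) ≤ (b,w) iff a ≤ b and v = w. -/
def PredStr.cle (P : PredStr) (p q : P.Ω × P.W) : Prop :=
  P.le p.1 q.1 ∧ p.2 = q.2

/-- The accessibility relation of the birelational collapse:
(a,v) R (b,w) iff a = b and v Rᵃ w. -/
def PredStr.cR (P : PredStr) (p q : P.Ω × P.W) : Prop :=
  p.1 = q.1 ∧ P.R p.1 p.2 q.2

/-- The collapse V↑ = {(a,v) | v ∈ Vᵃ} of a predicate. -/
def PredStr.up (P : PredStr) (V : P.Pred) : Set (P.Ω × P.W) :=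
  {p | p.2 ∈ P.ip V p.1}

/-- The class of sets of the birelational collapse. -/
def PredStr.cSets (P : PredStr) : Set (Set (P.Ω × P.W)) :=
  {S | ∃ V : P.Pred, S = P.up V}

/-- Birelational forcing, given the data of a birelational structure. -/
def bsat {W : Type*} (le R : W → W → Prop) (Sets : Set (Set W))
    (ip : ℕ → Set W) : (ℕ → Set W) → W → Fm → Prop
  | _, v, .pr P => v ∈ ip P
  | η, v, .var n => v ∈ η n
  | η, v, .imp A C =>
      ∀ v', le v v' → bsat le R Sets ip η v' A → bsat le R Sets ip η v' C
  | η, v, .box A => ∀ v' w', le v v' → R v' w' → bsat le R Sets ip η w' A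
  | η, v, .bbox A => ∀ v' u', le v v' → R u' v' → bsat le R Sets ip η u' A
  | η, v, .all A =>
      ∀ v', le v v' → ∀ V ∈ Sets, bsat le R Sets ip (cons V η) v' A

/-- Equivalence of a predicate structure and its birelational collapse:
(a,v) forces A (with predicate parameters collapsed) in the birelational
collapse iff a,v satisfies A in the predicate structure. -/
theorem collapse_equiv (P : PredStr) (A : Fm) (η : ℕ → P.Pred)
    (a : P.Ω) (v : P.W) :
    bsat P.cle P.cR P.cSets (fun p => P.up (P.prI p))
        (fun n => P.up (η n)) (a, v) A ↔
      P.sat η a v A := by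
  induction A generalizing η a v with
  | pr p => simp [bsat, PredStr.sat, PredStr.up]
  | var n => simp [bsat, PredStr.sat, PredStr.up]
  | imp A B ihA ihB =>
    constructor
    · intro h b hab hA
      exact (ihB ..).mp (h (b, v) ⟨hab, rfl⟩ ((ihA ..).mpr hA))
    · rintro h ⟨b, w⟩ ⟨hab, hw⟩ hA
      cases hw
      exact (ihB ..).mpr (h b hab ((ihA ..).mp hA))
  | box A ih =>
    constructor
    · intro h b hab w hR
      exact (ih ..).mp (h (b, v) (b, w) ⟨hab, rfl⟩ ⟨rfl, hR⟩)
    · rintro h ⟨b, v'⟩ ⟨c, w⟩ ⟨hab, hv⟩ ⟨hbc, hR⟩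
      cases hv; cases hbc
      exact (ih ..).mpr (h b hab w hR)
  | bbox A ih =>
    constructor
    · intro h b hab u hR
      exact (ih ..).mp (h (b, v) (b, u) ⟨hab, rfl⟩ ⟨rfl, hR⟩)
    · rintro h ⟨b, v'⟩ ⟨c, u⟩ ⟨hab, hv⟩ ⟨hcb, hR⟩
      cases hv; cases hcb
      exact (ih ..).mpr (h b hab u hR)
  | all A ih =>
    have env : ∀ V : P.Pred, (cons (P.up V) fun n => P.up (η n)) =
        fun n => P.up (cons V η n) := fun V => funext fun n => by cases n <;> rfl
    constructor
    · intro h b hab V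
      have := h (b, v) ⟨hab, rfl⟩ (P.up V) ⟨V, rfl⟩
      rw [env V] at this
      exact (ih ..).mp this
    · rintro h ⟨b, w⟩ ⟨hab, hw⟩ S ⟨V, rfl⟩
      cases hw
      rw [env V]
      exact (ih ..).mpr (h b hab V)


end SOTense
end

section
/- If a predicate structure P is comprehensive then its birelational collapse is comprehensive. -/
namespace SOTense

/-- A predicate structure is comprehensive if every formula (relative to every
environment) has a predicate as its extension. -/
def PredStr.comprehensive (P : PredStr) : Prop :=
  ∀ (A : Fm) (η : ℕ → P.Pred),
    ∃ V : P.Pred, ∀ a v, v ∈ P.ip V a ↔ P.sat η a v A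

lemma bsat_collapse (P : PredStr) :
    ∀ (A : Fm) (η' : ℕ → P.Pred) (p : P.Ω × P.W),
      bsat P.cle P.cR P.cSets (fun q => P.up (P.prI q))
        (fun n => P.up (η' n)) p A ↔ P.sat η' p.1 p.2 A := by
  intro A
  induction A with
  | pr q => intro η' p; exact Iff.rfl
  | var n => intro η' p; exact Iff.rfl
  | imp A B ihA ihB =>
    intro η' p
    constructor
    · intro h b hb hA
      exact (ihB η' (b, p.2)).mp (h (b, p.2) ⟨hb, rfl⟩ ((ihA η' (b, p.2)).mpr hA))
    · rintro h ⟨b, w⟩ ⟨hb, (rfl : p.2 = w)⟩ hA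
      exact (ihB η' (b, p.2)).mpr (h b hb ((ihA η' (b, p.2)).mp hA))
  | box A ihA =>
    intro η' p
    constructor
    · intro h b hb w hw
      exact (ihA η' (b, w)).mp (h (b, p.2) (b, w) ⟨hb, rfl⟩ ⟨rfl, hw⟩)
    · rintro h ⟨b, w⟩ ⟨b', w'⟩ ⟨hb, (rfl : p.2 = w)⟩ ⟨(rfl : b = b'), hR⟩
      exact (ihA η' (b, w')).mpr (h b hb w' hR)
  | bbox A ihA =>
    intro η' p
    constructor
    · intro h b hb u hu
      exact (ihA η' (b, u)).mp (h (b, p.2) (b, u) ⟨hb, rfl⟩ ⟨rfl, hu⟩)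
    · rintro h ⟨b, w⟩ ⟨b', u⟩ ⟨hb, (rfl : p.2 = w)⟩ ⟨(rfl : b' = b), hR⟩
      exact (ihA η' (b', u)).mpr (h b' hb u hR)
  | all A ihA =>
    intro η' p
    have hcons : ∀ (V : P.Pred),
        (cons (P.up V) fun n => P.up (η' n)) = fun n => P.up ((cons V η') n) := by
      intro V; funext n; cases n <;> rfl
    constructor
    · intro h b hb V
      have := h (b, p.2) ⟨hb, rfl⟩ (P.up V) ⟨V, rfl⟩
      rw [hcons V] at this
      exact (ihA (cons V η') (b, p.2)).mp this
    · rintro h ⟨b, w⟩ ⟨hb, (rfl : p.2 = w)⟩ S ⟨V, rfl⟩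
      rw [hcons V]
      exact (ihA (cons V η') (b, p.2)).mpr (h b hb V)

/-- If a predicate structure is comprehensive then so is its birelational
collapse: the extension of every formula (relative to any environment valued
in the collapsed class of sets) belongs to the collapsed class of sets. -/
theorem collapse_comprehensive (P : PredStr) (h : P.comprehensive) :
    ∀ (A : Fm) (η : ℕ → Set (P.Ω × P.W)), (∀ n, η n ∈ P.cSets) →
      {p | bsat P.cle P.cR P.cSets (fun q => P.up (P.prI q)) η p A} ∈
        P.cSets := by
  intro A η hη
  choose η' hη' using hη
  have hηeq : η = fun n => P.up (η' n) := funext hη'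
  obtain ⟨V, hV⟩ := h A η'
  refine ⟨V, ?_⟩
  ext ⟨a, v⟩
  simp only [PredStr.up, Set.mem_setOf_eq]
  rw [hηeq]
  exact (bsat_collapse P A η' (a, v)).trans (hV a v).symm

end SOTense
end

section
/- In the labelled sequent calculus lIKt2, the sequent R | Γ, v:⊥ ⇒ w:A is derivable whenever v and w are connected by an undirected path in the relational context R, where ⊥ := ∀X X. -/
namespace SOTense

/-- Relational contexts: sets of relational atoms uRv between world symbols. -/
abbrev RCtx := Set (ℕ × ℕ)
/-- Cedents: multisets of labelled formulas. -/
abbrev Cedent := Multiset (ℕ × Fm)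

/-- The world symbol w does not occur in the given relational context and
cedents. -/
def freshW (w : ℕ) (R : RCtx) (Γ Δ : Cedent) : Prop :=
  (∀ p ∈ R, w ≠ p.1 ∧ w ≠ p.2) ∧ (∀ q ∈ Γ, w ≠ q.1) ∧ (∀ q ∈ Δ, w ≠ q.1)

/-- The propositional symbol P does not occur in the given cedents. -/
def freshP (P : ℕ) (Γ Δ : Cedent) : Prop :=
  (∀ q ∈ Γ, ¬ q.2.occursPr P) ∧ (∀ q ∈ Δ, ¬ q.2.occursPr P)

/-- The single-succedent labelled sequent calculus lIKt2 for second-order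
intuitionistic tense logic.  `LI c R Γ w A` means R | Γ ⇒ w:A is derivable;
the cut rule is available only when c = true. -/
inductive LI : Bool → RCtx → Cedent → ℕ → Fm → Prop where
  | id (c : Bool) (R : RCtx) (v : ℕ) (A : Fm) : LI c R {(v, A)} v A
  | cut {R : RCtx} {Γ Γ' : Cedent} {v : ℕ} {A : Fm} {w : ℕ} {C : Fm} :
      LI true R Γ v A → LI true R ((v, A) ::ₘ Γ') w C →
      LI true R (Γ + Γ') w C
  | wkL {c R Γ w C} (v : ℕ) (A : Fm) :
      LI c R Γ w C → LI c R ((v, A) ::ₘ Γ) w C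
  | ctrL {c R Γ v A w C} :
      LI c R ((v, A) ::ₘ (v, A) ::ₘ Γ) w C → LI c R ((v, A) ::ₘ Γ) w C
  | impL {c R Γ Γ' v A B w C} :
      LI c R Γ v A → LI c R ((v, B) ::ₘ Γ') w C →
      LI c R ((v, A.imp B) ::ₘ (Γ + Γ')) w C
  | impR {c R Γ v A B} :
      LI c R ((v, A) ::ₘ Γ) v B → LI c R Γ v (A.imp B)
  | allL {c R Γ v A w D} (C : Fm) :
      LI c R ((v, A.inst C) ::ₘ Γ) w D → LI c R ((v, Fm.all A) ::ₘ Γ) w D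
  | allR {c R Γ v A} (P : ℕ) :
      LI c R Γ v (A.inst (Fm.pr P)) → freshP P Γ {(v, Fm.all A)} →
      LI c R Γ v (Fm.all A)
  | boxL {c R Γ v w A x C} :
      (v, w) ∈ R → LI c R ((w, A) ::ₘ Γ) x C →
      LI c R ((v, Fm.box A) ::ₘ Γ) x C
  | boxR {c R Γ v A} (w : ℕ) :
      LI c (insert (v, w) R) Γ w A → freshW w R Γ {(v, Fm.box A)} →
      LI c R Γ v (Fm.box A)
  | bboxL {c R Γ u v A x C} :
      (u, v) ∈ R → LI c R ((u, A) ::ₘ Γ) x C →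
      LI c R ((v, Fm.bbox A) ::ₘ Γ) x C
  | bboxR {c R Γ v A} (u : ℕ) :
      LI c (insert (u, v) R) Γ u A → freshW u R Γ {(v, Fm.bbox A)} →
      LI c R Γ v (Fm.bbox A)

/-- Labels v and w are connected by an undirected path in the relational
context R. -/
inductive Conn (R : RCtx) : ℕ → ℕ → Prop where
  | refl (v : ℕ) : Conn R v v
  | fwd {v u w : ℕ} : (v, u) ∈ R → Conn R u w → Conn R v w
  | bwd {v u w : ℕ} : (u, v) ∈ R → Conn R u w → Conn R v w

theorem wk_many {c : Bool} {R : RCtx} {Γ₀ : Cedent} {w : ℕ} {C : Fm}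
    (Γ : Cedent) (h : LI c R Γ₀ w C) : LI c R (Γ + Γ₀) w C := by
  induction Γ using Multiset.induction with
  | empty => simpa using h
  | cons a Γ ih =>
    rw [Multiset.cons_add]
    exact LI.wkL a.1 a.2 (by simpa using ih)

theorem var_inst (C : Fm) : (Fm.var 0).inst C = C := by
  simp [Fm.inst, Fm.subst]

/-- In lIKt2 the sequent R | Γ, v:⊥ ⇒ w:A is derivable whenever v and w are
connected by an undirected path in R, where ⊥ := ∀X X. -/
theorem bot_connected (c : Bool) (R : RCtx) (Γ : Cedent) (v w : ℕ) (A : Fm)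
    (h : Conn R v w) : LI c R ((v, Fm.bot) ::ₘ Γ) w A := by
  induction h with
  | refl v =>
    have := LI.allL (c := c) (R := R) (Γ := Γ) (v := v) (w := v) (D := A) (A := Fm.var 0) A ?_
    · exact this
    · rw [show ((Fm.var 0).inst A) = A from var_inst A]
      have h2 : LI c R ({(v, A)} : Cedent) v A := LI.id c R v A
      have := wk_many (c := c) (R := R) (w := v) (C := A) Γ h2
      rw [show ((v, A) ::ₘ Γ) = Γ + {(v, A)} from (Multiset.singleton_add _ _).symm.trans (add_comm _ _)]; exact this
  | fwd hvu _ ih =>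
    have h1 : LI c R ((_, Fm.box Fm.bot) ::ₘ Γ) _ A := LI.boxL hvu ih
    have := LI.allL (c := c) (A := Fm.var 0) (Fm.box Fm.bot)
      (by rw [show ((Fm.var 0).inst (Fm.box Fm.bot)) = Fm.box Fm.bot from var_inst _]; exact h1)
    exact this
  | bwd huv _ ih =>
    have h1 : LI c R ((_, Fm.bbox Fm.bot) ::ₘ Γ) _ A := LI.bboxL huv ih
    have := LI.allL (c := c) (A := Fm.var 0) (Fm.bbox Fm.bot)
      (by rw [show ((Fm.var 0).inst (Fm.bbox Fm.bot)) = Fm.bbox Fm.bot from var_inst _]; exact h1)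
    exact this

end SOTense
end

section
/- Multi-succedent to single-succedent: if the multi-succedent labelled calculus lIKt2^m proves R | Γ ⇒ Δ (with or without cut), then there is a labelled formula w:A in Δ such that the single-succedent calculus lIKt2 proves R | Γ ⇒ w:A (respectively with or without cut). -/
namespace SOTense

/-- The multi-succedent (Maehara-style) labelled calculus lIKt2ᵐ: the classical
calculus lKt2 restricted so that each right logical rule has singleton RHS in
its premiss (Δ = ∅).  `LM c R Γ Δ` means R | Γ ⇒ Δ is derivable; the cut rule
is available only when c = true. -/
inductive LM : Bool → RCtx → Cedent → Cedent → Prop where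
  | id (c : Bool) (R : RCtx) (v : ℕ) (A : Fm) : LM c R {(v, A)} {(v, A)}
  | cut {R : RCtx} {Γ Γ' Δ Δ' : Cedent} {v : ℕ} {A : Fm} :
      LM true R Γ ((v, A) ::ₘ Δ) → LM true R ((v, A) ::ₘ Γ') Δ' →
      LM true R (Γ + Γ') (Δ + Δ')
  | wkL {c R Γ Δ} (v : ℕ) (A : Fm) : LM c R Γ Δ → LM c R ((v, A) ::ₘ Γ) Δ
  | wkR {c R Γ Δ} (v : ℕ) (A : Fm) : LM c R Γ Δ → LM c R Γ ((v, A) ::ₘ Δ)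
  | ctrL {c R Γ Δ v A} :
      LM c R ((v, A) ::ₘ (v, A) ::ₘ Γ) Δ → LM c R ((v, A) ::ₘ Γ) Δ
  | ctrR {c R Γ Δ v A} :
      LM c R Γ ((v, A) ::ₘ (v, A) ::ₘ Δ) → LM c R Γ ((v, A) ::ₘ Δ)
  | impL {c R Γ Γ' Δ Δ' v A B} :
      LM c R Γ ((v, A) ::ₘ Δ) → LM c R ((v, B) ::ₘ Γ') Δ' →
      LM c R ((v, A.imp B) ::ₘ (Γ + Γ')) (Δ + Δ')
  | impR {c R Γ v A B} :
      LM c R ((v, A) ::ₘ Γ) {(v, B)} → LM c R Γ {(v, A.imp B)}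
  | allL {c R Γ Δ v A} (C : Fm) :
      LM c R ((v, A.inst C) ::ₘ Γ) Δ → LM c R ((v, Fm.all A) ::ₘ Γ) Δ
  | allR {c R Γ v A} (P : ℕ) :
      LM c R Γ {(v, A.inst (Fm.pr P))} → freshP P Γ {(v, Fm.all A)} →
      LM c R Γ {(v, Fm.all A)}
  | boxL {c R Γ Δ v w A} :
      (v, w) ∈ R → LM c R ((w, A) ::ₘ Γ) Δ →
      LM c R ((v, Fm.box A) ::ₘ Γ) Δ
  | boxR {c R Γ v A} (w : ℕ) :
      LM c (insert (v, w) R) Γ {(w, A)} → freshW w R Γ {(v, Fm.box A)} →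
      LM c R Γ {(v, Fm.box A)}
  | bboxL {c R Γ Δ u v A} :
      (u, v) ∈ R → LM c R ((u, A) ::ₘ Γ) Δ →
      LM c R ((v, Fm.bbox A) ::ₘ Γ) Δ
  | bboxR {c R Γ v A} (u : ℕ) :
      LM c (insert (u, v) R) Γ {(u, A)} → freshW u R Γ {(v, Fm.bbox A)} →
      LM c R Γ {(v, Fm.bbox A)}

/-- Multiset weakening on the left for lIKt2. -/
lemma LI.wk {c : Bool} {R : RCtx} {Γ : Cedent} {w : ℕ} {C : Fm}
    (Γ' : Cedent) (h : LI c R Γ w C) : LI c R (Γ + Γ') w C := by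
  induction Γ' using Multiset.induction with
  | empty => simpa using h
  | cons a s ih =>
    obtain ⟨v, A⟩ := a
    rw [show Γ + (v, A) ::ₘ s = (v, A) ::ₘ (Γ + s) by
      rw [Multiset.add_cons]]
    exact LI.wkL v A ih

/-- Multi-succedent to single-succedent: if lIKt2ᵐ proves R | Γ ⇒ Δ (with or
without cut) then there is a labelled formula w:A in Δ such that lIKt2 proves
R | Γ ⇒ w:A (with or without cut, respectively). -/
theorem multi_to_single {c : Bool} {R : RCtx} {Γ Δ : Cedent}
    (h : LM c R Γ Δ) : ∃ p ∈ Δ, LI c R Γ p.1 p.2 := by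
  induction h with
  | id c R v A => exact ⟨(v, A), Multiset.mem_singleton_self _, LI.id c R v A⟩
  | @cut R Γ Γ' Δ Δ' v A _ _ ih1 ih2 =>
    obtain ⟨p, hp, hd⟩ := ih1
    rcases Multiset.mem_cons.1 hp with h1 | h1
    · subst h1
      obtain ⟨q, hq, hd'⟩ := ih2
      exact ⟨q, Multiset.mem_add.2 (Or.inr hq), LI.cut hd hd'⟩
    · exact ⟨p, Multiset.mem_add.2 (Or.inl h1), LI.wk Γ' hd⟩
  | wkL v A _ ih =>
    obtain ⟨p, hp, hd⟩ := ih
    exact ⟨p, hp, LI.wkL v A hd⟩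
  | wkR v A _ ih =>
    obtain ⟨p, hp, hd⟩ := ih
    exact ⟨p, Multiset.mem_cons.2 (Or.inr hp), hd⟩
  | ctrL _ ih =>
    obtain ⟨p, hp, hd⟩ := ih
    exact ⟨p, hp, LI.ctrL hd⟩
  | @ctrR c R Γ Δ v A _ ih =>
    obtain ⟨p, hp, hd⟩ := ih
    rcases Multiset.mem_cons.1 hp with h1 | h1
    · exact ⟨p, Multiset.mem_cons.2 (Or.inl h1), hd⟩
    · exact ⟨p, h1, hd⟩
  | @impL c R Γ Γ' Δ Δ' v A B _ _ ih1 ih2 =>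
    obtain ⟨p, hp, hd⟩ := ih1
    rcases Multiset.mem_cons.1 hp with h1 | h1
    · subst h1
      obtain ⟨q, hq, hd'⟩ := ih2
      exact ⟨q, Multiset.mem_add.2 (Or.inr hq), LI.impL hd hd'⟩
    · exact ⟨p, Multiset.mem_add.2 (Or.inl h1), LI.wkL _ _ (LI.wk Γ' hd)⟩
  | @impR c R Γ v A B _ ih =>
    obtain ⟨p, hp, hd⟩ := ih
    rw [Multiset.mem_singleton] at hp; subst hp
    exact ⟨(v, A.imp B), Multiset.mem_singleton_self _, LI.impR hd⟩
  | allL C _ ih =>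
    obtain ⟨p, hp, hd⟩ := ih
    exact ⟨p, hp, LI.allL C hd⟩
  | @allR c R Γ v A P _ hf ih =>
    obtain ⟨p, hp, hd⟩ := ih
    rw [Multiset.mem_singleton] at hp; subst hp
    exact ⟨(v, Fm.all A), Multiset.mem_singleton_self _, LI.allR P hd hf⟩
  | boxL hR _ ih =>
    obtain ⟨p, hp, hd⟩ := ih
    exact ⟨p, hp, LI.boxL hR hd⟩
  | @boxR c R Γ v A w _ hf ih =>
    obtain ⟨p, hp, hd⟩ := ih
    rw [Multiset.mem_singleton] at hp; subst hp
    exact ⟨(v, Fm.box A), Multiset.mem_singleton_self _, LI.boxR w hd hf⟩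
  | bboxL hR _ ih =>
    obtain ⟨p, hp, hd⟩ := ih
    exact ⟨p, hp, LI.bboxL hR hd⟩
  | @bboxR c R Γ v A u _ hf ih =>
    obtain ⟨p, hp, hd⟩ := ih
    rw [Multiset.mem_singleton] at hp; subst hp
    exact ⟨(v, Fm.bbox A), Multiset.mem_singleton_self _, LI.bboxR u hd hf⟩

end SOTense
end

section
/- IKt2 proves ¬¬(Aᴺ) ↔ Aᴺ for every formula A, where Aᴺ is the Gödel–Gentzen negative translation; moreover IKt2 proves ⊥ ↔ ⊥ᴺ. -/
namespace SOTense

/-- The Gödel–Gentzen negative translation: double-negate atoms, commute with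
→, □, ■ and ∀. -/
def Fm.ntr : Fm → Fm
  | .pr p => (Fm.pr p).neg.neg
  | .var n => (Fm.var n).neg.neg
  | .imp A B => .imp A.ntr B.ntr
  | .box A => .box A.ntr
  | .bbox A => .bbox A.ntr
  | .all A => .all A.ntr

/-! ### Auxiliary machinery -/

namespace Aux

open Fm Prov

/-- Natural deduction style provability from hypotheses, for easy
propositional reasoning. -/
inductive Ded (cl : Bool) : List Fm → Fm → Prop where
  | hyp {Γ A} : A ∈ Γ → Ded cl Γ A
  | ax {Γ A} : Prov cl A → Ded cl Γ A
  | mp {Γ A B} : Ded cl Γ (A.imp B) → Ded cl Γ A → Ded cl Γ B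

theorem prov_id (cl : Bool) (A : Fm) : Prov cl (A.imp A) :=
  Prov.mp (Prov.mp (Prov.axS cl A (A.imp A) A) (Prov.axK cl A (A.imp A)))
    (Prov.axK cl A A)

theorem Ded.deduction_aux {cl : Bool} {Δ : List Fm} {B : Fm}
    (h : Ded cl Δ B) : ∀ {A : Fm} {Γ : List Fm}, Δ = A :: Γ →
    Ded cl Γ (A.imp B) := by
  induction h with
  | hyp hm =>
    intro A Γ hΔ
    subst hΔ
    rcases List.mem_cons.mp hm with h | h
    · cases h; exact Ded.ax (prov_id cl _)
    · exact Ded.mp (Ded.ax (Prov.axK cl _ A)) (Ded.hyp h)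
  | ax h =>
    intro A Γ hΔ
    exact Ded.mp (Ded.ax (Prov.axK cl _ A)) (Ded.ax h)
  | mp _ _ ih1 ih2 =>
    intro A Γ hΔ
    exact Ded.mp (Ded.mp (Ded.ax (Prov.axS cl A _ _)) (ih1 hΔ)) (ih2 hΔ)

theorem Ded.deduction {cl : Bool} {Γ : List Fm} {A B : Fm}
    (h : Ded cl (A :: Γ) B) : Ded cl Γ (A.imp B) :=
  Ded.deduction_aux h rfl

theorem prov_of_ded {cl : Bool} {A : Fm} (h : Ded cl [] A) : Prov cl A := by
  induction h with
  | hyp hm => simp at hm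
  | ax h => exact h
  | mp _ _ ih1 ih2 => exact Prov.mp ih1 ih2

/-- Meta-level transitivity of implication. -/
theorem prov_trans {cl : Bool} {A B C : Fm} (h1 : Prov cl (A.imp B))
    (h2 : Prov cl (B.imp C)) : Prov cl (A.imp C) :=
  prov_of_ded <| .deduction <| .mp (.ax h2) (.mp (.ax h1) (.hyp (by simp)))

/-! #### Basic computation lemmas -/

theorem subst_lift (A : Fm) (k : ℕ) (C : Fm) : (A.lift k).subst k C = A := by
  induction A generalizing k C with
  | pr p => rfl
  | var n =>
    simp only [lift]
    by_cases h : n < k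
    · simp [subst, h]
    · simp only [if_neg h, subst]
      have h1 : ¬ (n + 1 < k) := by omega
      have h2 : ¬ (n + 1 = k) := by omega
      simp [h1, h2]
  | imp A B ihA ihB => simp [lift, subst, ihA, ihB]
  | box A ih => simp [lift, subst, ih]
  | bbox A ih => simp [lift, subst, ih]
  | all A ih => simp [lift, subst, ih]

theorem lift_bot (c : ℕ) : Fm.bot.lift c = Fm.bot := by
  simp only [bot]; simp [lift]

theorem subst_bot (k : ℕ) (C : Fm) : Fm.bot.subst k C = Fm.bot := by
  simp only [bot]; simp [subst]

theorem subst_neg (A : Fm) (k : ℕ) (C : Fm) :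
    (A.neg).subst k C = (A.subst k C).neg := by
  simp [neg, subst, subst_bot, bot]

theorem lift_neg (A : Fm) (c : ℕ) : (A.neg).lift c = (A.lift c).neg := by
  simp [neg, lift, lift_bot, bot]

theorem subst_var_zero (C : Fm) : (Fm.var 0).subst 0 C = C := by
  simp [subst]

/-! #### Propositional lemmas -/

/-- ⊥ → A -/
theorem botElim (cl : Bool) (A : Fm) : Prov cl (Fm.bot.imp A) := by
  have := Prov.axC cl (Fm.var 0) A
  rwa [inst, subst_var_zero] at this

/-- A → ¬¬A -/
theorem dni (cl : Bool) (A : Fm) : Prov cl (A.imp A.neg.neg) :=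
  prov_of_ded <| .deduction <| .deduction <|
    .mp (.hyp (show A.neg ∈ _ by simp)) (.hyp (show A ∈ _ by simp))

/-- ¬¬¬A → ¬A -/
theorem tripleNeg (cl : Bool) (A : Fm) : Prov cl (A.neg.neg.neg.imp A.neg) :=
  prov_of_ded <| .deduction <| .deduction <|
    .mp (.hyp (show A.neg.neg.neg ∈ _ by simp))
      (.mp (.ax (dni cl A)) (.hyp (by simp)))

/-- from ⊢ A → B infer ⊢ ¬¬A → ¬¬B -/
theorem nnMono {cl : Bool} {A B : Fm} (h : Prov cl (A.imp B)) :
    Prov cl (A.neg.neg.imp B.neg.neg) :=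
  prov_of_ded <| .deduction <| .deduction <|
    .mp (.hyp (show A.neg.neg ∈ _ by simp)) <| .deduction <|
      .mp (.hyp (show B.neg ∈ _ by simp)) (.mp (.ax h) (.hyp (by simp)))

/-! #### Modal lemmas -/

theorem boxMono {cl : Bool} {A B : Fm} (h : Prov cl (A.imp B)) :
    Prov cl ((Fm.box A).imp (Fm.box B)) :=
  Prov.mp (Prov.axBoxFun cl A B) (Prov.necBox h)

theorem bboxMono {cl : Bool} {A B : Fm} (h : Prov cl (A.imp B)) :
    Prov cl ((Fm.bbox A).imp (Fm.bbox B)) :=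
  Prov.mp (Prov.axBboxFun cl A B) (Prov.necBbox h)

/-- ◊B → ¬□(B → ■⊥) -/
theorem dia_inst (cl : Bool) (B : Fm) :
    Prov cl ((Fm.dia B).imp (Fm.box (B.imp (Fm.bbox Fm.bot))).neg) := by
  have := Prov.axC cl (Fm.imp (Fm.box (Fm.imp (B.lift 0) (Fm.bbox (Fm.var 0))))
    (Fm.var 0)) Fm.bot
  simpa [Fm.dia, inst, subst, subst_lift, neg] using this

/-- ◆B → ¬■(B → □⊥) -/
theorem bdia_inst (cl : Bool) (B : Fm) :
    Prov cl ((Fm.bdia B).imp (Fm.bbox (B.imp (Fm.box Fm.bot))).neg) := by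
  have := Prov.axC cl (Fm.imp (Fm.bbox (Fm.imp (B.lift 0) (Fm.box (Fm.var 0))))
    (Fm.var 0)) Fm.bot
  simpa [Fm.bdia, inst, subst, subst_lift, neg] using this

/-- ⊢ A → (¬A → ●⊥) for ● ∈ {□,■} wrapped versions. -/
theorem toBboxBot (cl : Bool) (A : Fm) :
    Prov cl (A.imp (A.neg.imp (Fm.bbox Fm.bot))) :=
  prov_of_ded <| .deduction <| .deduction <|
    .mp (.ax (botElim cl (Fm.bbox Fm.bot)))
      (.mp (.hyp (show A.neg ∈ _ by simp)) (.hyp (show A ∈ _ by simp)))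

theorem toBoxBot (cl : Bool) (A : Fm) :
    Prov cl (A.imp (A.neg.imp (Fm.box Fm.bot))) :=
  prov_of_ded <| .deduction <| .deduction <|
    .mp (.ax (botElim cl (Fm.box Fm.bot)))
      (.mp (.hyp (show A.neg ∈ _ by simp)) (.hyp (show A ∈ _ by simp)))

/-- ◊¬A → ¬□A -/
theorem dia_neg (cl : Bool) (A : Fm) :
    Prov cl ((Fm.dia A.neg).imp (Fm.box A).neg) := by
  have h1 : Prov cl ((Fm.box A).imp (Fm.box (A.neg.imp (Fm.bbox Fm.bot)))) :=
    boxMono (toBboxBot cl A)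
  have h2 := dia_inst cl A.neg
  exact prov_of_ded <| .deduction <| .deduction <|
    .mp (.mp (.ax h2) (.hyp (show Fm.dia A.neg ∈ _ by simp)))
      (.mp (.ax h1) (.hyp (by simp)))

/-- ◆¬A → ¬■A -/
theorem bdia_neg (cl : Bool) (A : Fm) :
    Prov cl ((Fm.bdia A.neg).imp (Fm.bbox A).neg) := by
  have h1 : Prov cl ((Fm.bbox A).imp (Fm.bbox (A.neg.imp (Fm.box Fm.bot)))) :=
    bboxMono (toBoxBot cl A)
  have h2 := bdia_inst cl A.neg
  exact prov_of_ded <| .deduction <| .deduction <|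
    .mp (.mp (.ax h2) (.hyp (show Fm.bdia A.neg ∈ _ by simp)))
      (.mp (.ax h1) (.hyp (by simp)))

/-- ¬A → ■¬□A -/
theorem neg_bbox_neg_box (cl : Bool) (A : Fm) :
    Prov cl ((A.neg).imp (Fm.bbox (Fm.box A).neg)) :=
  prov_trans (Prov.axTenseBboxDia cl A.neg) (bboxMono (dia_neg cl A))

/-- ¬A → □¬■A -/
theorem neg_box_neg_bbox (cl : Bool) (A : Fm) :
    Prov cl ((A.neg).imp (Fm.box (Fm.bbox A).neg)) :=
  prov_trans (Prov.axTenseBoxBdia cl A.neg) (boxMono (bdia_neg cl A))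

/-- ¬¬□A → □¬¬A -/
theorem nn_box (cl : Bool) (A : Fm) :
    Prov cl ((Fm.box A).neg.neg.imp (Fm.box A.neg.neg)) := by
  have h1 : Prov cl ((Fm.box A).neg.neg.imp
      (Fm.box (Fm.bbox (Fm.box A).neg).neg)) :=
    neg_box_neg_bbox cl (Fm.box A).neg
  have h2 : Prov cl ((Fm.bbox (Fm.box A).neg).neg.imp A.neg.neg) :=
    prov_of_ded <| .deduction <| .deduction <|
      .mp (.hyp (show (Fm.bbox (Fm.box A).neg).neg ∈ _ by simp))
        (.mp (.ax (neg_bbox_neg_box cl A)) (.hyp (by simp)))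
  exact prov_trans h1 (boxMono h2)

/-- ¬¬■A → ■¬¬A -/
theorem nn_bbox (cl : Bool) (A : Fm) :
    Prov cl ((Fm.bbox A).neg.neg.imp (Fm.bbox A.neg.neg)) := by
  have h1 : Prov cl ((Fm.bbox A).neg.neg.imp
      (Fm.bbox (Fm.box (Fm.bbox A).neg).neg)) :=
    neg_bbox_neg_box cl (Fm.bbox A).neg
  have h2 : Prov cl ((Fm.box (Fm.bbox A).neg).neg.imp A.neg.neg) :=
    prov_of_ded <| .deduction <| .deduction <|
      .mp (.hyp (show (Fm.box (Fm.bbox A).neg).neg ∈ _ by simp))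
        (.mp (.ax (neg_box_neg_bbox cl A)) (.hyp (by simp)))
  exact prov_trans h1 (bboxMono h2)

/-! #### Freshness of propositional symbols -/

def prBound : Fm → ℕ
  | .pr p => p + 1
  | .var _ => 0
  | .imp A B => max (prBound A) (prBound B)
  | .box A => prBound A
  | .bbox A => prBound A
  | .all A => prBound A

theorem lt_prBound_of_occurs {P : ℕ} {A : Fm} (h : A.occursPr P) :
    P < prBound A := by
  induction A with
  | pr p => simp [occursPr] at h; simp [prBound, h]
  | var n => simp [occursPr] at h
  | imp A B ihA ihB =>
    rcases h with h | h
    · exact lt_of_lt_of_le (ihA h) (le_max_left _ _)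
    · exact lt_of_lt_of_le (ihB h) (le_max_right _ _)
  | box A ih => exact ih h
  | bbox A ih => exact ih h
  | all A ih => exact ih h

theorem not_occurs_of_le {P : ℕ} {A : Fm} (h : prBound A ≤ P) :
    ¬ A.occursPr P := fun hc => absurd (lt_prBound_of_occurs hc) (by omega)

theorem occursPr_lift {P : ℕ} : ∀ (A : Fm) (c : ℕ),
    (A.lift c).occursPr P ↔ A.occursPr P
  | .pr p, c => Iff.rfl
  | .var n, c => by
    by_cases h : n < c <;> simp [lift, h, occursPr]
  | .imp A B, c => by
    simp [lift, occursPr, occursPr_lift A c, occursPr_lift B c]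
  | .box A, c => occursPr_lift A c
  | .bbox A, c => occursPr_lift A c
  | .all A, c => occursPr_lift A (c + 1)

theorem prBound_lift : ∀ (A : Fm) (c : ℕ), prBound (A.lift c) = prBound A
  | .pr p, c => rfl
  | .var n, c => by by_cases h : n < c <;> simp [lift, h, prBound]
  | .imp A B, c => by simp [lift, prBound, prBound_lift A c, prBound_lift B c]
  | .box A, c => prBound_lift A c
  | .bbox A, c => prBound_lift A c
  | .all A, c => prBound_lift A (c + 1)

/-! #### Conjunction introduction -/

theorem conj_intro {cl : Bool} {A B : Fm} (hA : Prov cl A) (hB : Prov cl B) :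
    Prov cl (A.conj B) := by
  set P := max (prBound A) (prBound B) with hP
  have hinst : (Fm.imp (Fm.imp (A.lift 0) (Fm.imp (B.lift 0) (Fm.var 0)))
      (Fm.var 0)).inst (Fm.pr P)
      = (A.imp ((B.imp (Fm.pr P)))).imp (Fm.pr P) := by
    simp [inst, subst, subst_lift]
  have hprem : Prov cl ((A.imp ((B.imp (Fm.pr P)))).imp (Fm.pr P)) :=
    prov_of_ded <| .deduction <|
      .mp (.mp (.hyp (show A.imp (B.imp (Fm.pr P)) ∈ _ by simp)) (.ax hA))
        (.ax hB)
  refine Prov.gen (P := P) (hinst ▸ hprem) ?_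
  intro hocc
  have : A.occursPr P ∨ B.occursPr P := by
    simpa [occursPr, occursPr_lift] using hocc
  rcases this with h | h
  · exact not_occurs_of_le (le_max_left _ _) h
  · exact not_occurs_of_le (le_max_right _ _) h

/-! #### Negative formulas and stability -/

inductive IsNeg : Fm → Prop where
  | pr (p : ℕ) : IsNeg (Fm.pr p).neg.neg
  | var (n : ℕ) : IsNeg (Fm.var n).neg.neg
  | imp {A B : Fm} : IsNeg A → IsNeg B → IsNeg (A.imp B)
  | box {A : Fm} : IsNeg A → IsNeg (Fm.box A)
  | bbox {A : Fm} : IsNeg A → IsNeg (Fm.bbox A)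
  | all {A : Fm} : IsNeg A → IsNeg (Fm.all A)

theorem isNeg_ntr : ∀ A : Fm, IsNeg A.ntr
  | .pr p => IsNeg.pr p
  | .var n => IsNeg.var n
  | .imp A B => IsNeg.imp (isNeg_ntr A) (isNeg_ntr B)
  | .box A => IsNeg.box (isNeg_ntr A)
  | .bbox A => IsNeg.bbox (isNeg_ntr A)
  | .all A => IsNeg.all (isNeg_ntr A)

def size : Fm → ℕ
  | .pr _ => 1
  | .var _ => 1
  | .imp A B => size A + size B + 1
  | .box A => size A + 1
  | .bbox A => size A + 1
  | .all A => size A + 1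

theorem size_subst_pr : ∀ (A : Fm) (k P : ℕ),
    size (A.subst k (Fm.pr P)) = size A
  | .pr p, k, P => rfl
  | .var n, k, P => by
    by_cases h1 : n < k
    · simp [subst, h1]
    · by_cases h2 : n = k <;> simp [subst, h1, h2, size]
  | .imp A B, k, P => by
    simp [subst, size, size_subst_pr A k P, size_subst_pr B k P]
  | .box A, k, P => by simp [subst, size, size_subst_pr A k P]
  | .bbox A, k, P => by simp [subst, size, size_subst_pr A k P]
  | .all A, k, P => by simp [subst, size, lift, size_subst_pr A (k + 1) P]

theorem isNeg_subst_pr {A : Fm} (h : IsNeg A) :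
    ∀ (k P : ℕ), IsNeg (A.subst k (Fm.pr P)) := by
  induction h with
  | pr p => intro k P; simpa [neg, subst, subst_bot] using IsNeg.pr p
  | var n =>
    intro k P
    have : ((Fm.var n).neg.neg).subst k (Fm.pr P)
        = ((Fm.var n).subst k (Fm.pr P)).neg.neg := by
      simp [neg, subst, subst_bot, bot]
    rw [this]
    by_cases h1 : n < k
    · simpa [subst, h1] using IsNeg.var n
    · by_cases h2 : n = k
      · simpa [subst, h1, h2] using IsNeg.pr P
      · simpa [subst, h1, h2] using IsNeg.var (n - 1)
  | imp _ _ ihA ihB => intro k P; exact IsNeg.imp (ihA k P) (ihB k P)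
  | box _ ih => intro k P; exact IsNeg.box (ih k P)
  | bbox _ ih => intro k P; exact IsNeg.bbox (ih k P)
  | all _ ih =>
    intro k P
    exact IsNeg.all (by simpa [lift] using ih (k + 1) P)

/-- Stability: ⊢ ¬¬A → A for negative A. -/
theorem stab_aux (cl : Bool) :
    ∀ n : ℕ, ∀ A : Fm, IsNeg A → size A ≤ n → Prov cl (A.neg.neg.imp A) := by
  intro n
  induction n with
  | zero =>
    intro A hA hs
    exfalso
    cases hA <;> simp [size, neg, bot] at hs
  | succ n ih =>
    intro A hA hs
    cases hA with
    | pr p => exact tripleNeg cl (Fm.pr p).neg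
    | var m => exact tripleNeg cl (Fm.var m).neg
    | @imp A B hA hB =>
      have hsB : size B ≤ n := by simp [size] at hs; omega
      have stabB := ih B hB hsB
      -- ¬¬(A→B) → (A→B)
      refine prov_of_ded <| .deduction <| .deduction ?_
      refine Ded.mp (.ax stabB) ?_
      refine Ded.deduction ?_
      -- context: ¬¬(A→B), A, ¬B ⊢ ⊥
      refine Ded.mp (.hyp (show (A.imp B).neg.neg ∈ _ by simp)) ?_
      refine Ded.deduction ?_
      exact Ded.mp (.hyp (show B.neg ∈ _ by simp))
        (.mp (.hyp (show A.imp B ∈ _ by simp))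
          (.hyp (show A ∈ _ by simp)))
    | @box A hA =>
      have : size A ≤ n := by simp [size] at hs; omega
      exact prov_trans (nn_box cl A) (boxMono (ih A hA this))
    | @bbox A hA =>
      have : size A ≤ n := by simp [size] at hs; omega
      exact prov_trans (nn_bbox cl A) (bboxMono (ih A hA this))
    | @all A hA =>
      have hsA : size A ≤ n := by simp [size] at hs; omega
      set P := prBound A with hPdef
      set AP := A.subst 0 (Fm.pr P) with hAP
      have stabAP : Prov cl (AP.neg.neg.imp AP) :=
        ih AP (isNeg_subst_pr hA 0 P) (by rw [hAP, size_subst_pr]; exact hsA)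
      -- ⊢ ¬¬∀A → AP
      have h1 : Prov cl ((Fm.all A).neg.neg.imp AP) :=
        prov_trans (nnMono (Prov.axC cl A (Fm.pr P))) stabAP
      -- generalize: G := ∀X (lift(¬¬∀A) → A)
      set D : Fm := ((Fm.all A).neg.neg).lift 0 with hD
      have hGinst : (D.imp A).inst (Fm.pr P)
          = ((Fm.all A).neg.neg).imp AP := by
        simp [inst, subst, hD, subst_lift, hAP, neg, bot]
      have hG : Prov cl (Fm.all (D.imp A)) := by
        refine Prov.gen (P := P) (by rw [hGinst]; exact h1) ?_
        intro hocc
        have : A.occursPr P := by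
          have hocc' : (D.imp A).occursPr P := hocc
          rcases hocc' with h | h
          · have : ((Fm.all A).neg.neg).occursPr P := (occursPr_lift _ 0).mp h
            rcases this with (h' | h') <;>
              first
                | (rcases h' with (h'' | h'')
                   · exact h''
                   · simp [bot, occursPr] at h'')
                | simp [bot, occursPr] at h'
          · exact h
        exact not_occurs_of_le le_rfl this
      -- ¬¬∀A → ∀D  (axV), then ∀(D→A) → ∀D → ∀A
      have h2 : Prov cl (((Fm.all A).neg.neg).imp (Fm.all D)) :=
        Prov.axV cl ((Fm.all A).neg.neg)
      have h3 : Prov cl ((Fm.all D).imp (Fm.all A)) :=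
        Prov.mp (Prov.axAllFun cl D A) hG
      exact prov_trans h2 h3

theorem stab {cl : Bool} {A : Fm} (h : IsNeg A) :
    Prov cl (A.neg.neg.imp A) :=
  stab_aux cl (size A) A h le_rfl

end Aux

/-- IKt2 proves ¬¬(Aᴺ) ↔ Aᴺ for every formula A, where ᴺ is the
Gödel–Gentzen negative translation; moreover IKt2 proves ⊥ ↔ ⊥ᴺ. -/
theorem ntr_stable :
    (∀ A : Fm, IKt2 (A.ntr.neg.neg.iff A.ntr)) ∧
    IKt2 (Fm.bot.iff Fm.bot.ntr) := by
  constructor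
  · intro A
    exact Aux.conj_intro (Aux.stab (Aux.isNeg_ntr A)) (Aux.dni false A.ntr)
  · refine Aux.conj_intro (Aux.botElim false Fm.bot.ntr) ?_
    -- ⊥ᴺ = ∀X ¬¬X ⊢ ⊥ : instantiate at ⊥, then ¬¬⊥ → ⊥
    have h1 : Prov false (Fm.bot.ntr.imp Fm.bot.neg.neg) := by
      have := Prov.axC false ((Fm.var 0).neg.neg) Fm.bot
      rw [Fm.inst, Aux.subst_neg, Aux.subst_neg, Aux.subst_var_zero] at this
      exact this
    have h2 : Prov false (Fm.bot.neg.neg.imp Fm.bot) :=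
      Aux.prov_of_ded <| .deduction <|
        .mp (.hyp (show Fm.bot.neg.neg ∈ _ by simp))
          (.ax (Aux.prov_id false Fm.bot))
    exact Aux.prov_trans h1 h2

end SOTense
end
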